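/- arXiv:2204.01191 — 8 statements merged into one kernel-verified Lean document; each statement's English description precedes it below -/
import Mathlib

section
/- Let g : ℝᵐ → ℝ ∪ {+∞} be Lipschitz continuous around F(x̄) relative to its domain, let F : ℝⁿ → ℝᵐ be semi-differentiable at x̄ for the direction w, suppose f := g ∘ F is finite at x̄, and assume the directional metric subregularity qualification condition holds for f = g ∘ F at x̄ in direction w. Then the exact subderivative chain rule holds: df(x̄)(w) = dg(F(x̄))(dF(x̄)(w)). -/
/-!
Every difference quotient of `g` at `F x̄` in a direction `v` near `dF(x̄)(w)` is matched by a
difference quotient of `g ∘ F` at `x̄` in a direction `ψ` near `w`: metric subregularity moves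
`x̄ + t w` into `dom (g ∘ F)` at cost `κ · dist(F(x̄ + t w), dom g) = o(t)` whenever
`F x̄ + t v ∈ dom g`, and the relative Lipschitz continuity of `g` bounds the gap between the two
quotients by `ℓ ‖(F(x̄ + t ψ) − F x̄)/t − v‖ → 0`. The opposite inequality only needs the
semi-differentiability of `F`.
-/

open Filter Topology Set

/-- The subderivative `df(x̄)(w) := liminf_{t↓0, w'→w} (f(x̄ + t w') − f(x̄))/t`
of an extended-real-valued function. -/
noncomputable def subderiv {n : ℕ} (f : EuclideanSpace ℝ (Fin n) → EReal)
    (x w : EuclideanSpace ℝ (Fin n)) : EReal :=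
  Filter.liminf
    (fun p : ℝ × EuclideanSpace ℝ (Fin n) =>
      (((p.1)⁻¹ : ℝ) : EReal) * (f (x + p.1 • p.2) - f x))
    ((𝓝[>] (0:ℝ)) ×ˢ 𝓝 w)

/-- `F` is semi-differentiable at `x` for the direction `w` with semi-derivative `d`:
`d = lim_{t↓0, w'→w} (F(x + t w') − F(x))/t`. -/
def HasSemiderivAt {E V : Type*} [NormedAddCommGroup E] [NormedSpace ℝ E]
    [NormedAddCommGroup V] [NormedSpace ℝ V]
    (F : E → V) (x w : E) (d : V) : Prop :=
  Filter.Tendsto (fun p : ℝ × E => (p.1)⁻¹ • (F (x + p.1 • p.2) - F x))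
    ((𝓝[>] (0:ℝ)) ×ˢ 𝓝 w) (𝓝 d)

open Metric

section

variable {E V : Type*} [NormedAddCommGroup E] [NormedSpace ℝ E]
  [NormedAddCommGroup V] [NormedSpace ℝ V]

/-- `subderiv f x w` is the liminf of `diffQuotient f x` along `𝓝[>] 0 ×ˢ 𝓝 w`. -/
noncomputable def diffQuotient (f : E → EReal) (x : E) (p : ℝ × E) : EReal :=
  ((p.1⁻¹ : ℝ) : EReal) * (f (x + p.1 • p.2) - f x)

lemma eventually_fst_pos {β : Type*} (l : Filter β) : ∀ᶠ p in 𝓝[>] (0 : ℝ) ×ˢ l, 0 < p.1 :=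
  tendsto_fst.eventually eventually_mem_nhdsWithin

lemma diffQuotient_comp (g : V → EReal) (F : E → V) (x : E) {t : ℝ} (ht : t ≠ 0) (w : E) :
    diffQuotient (fun z => g (F z)) x (t, w) =
      diffQuotient g (F x) (t, t⁻¹ • (F (x + t • w) - F x)) := by
  simp only [diffQuotient, smul_inv_smul₀ ht, add_sub_cancel]

lemma tendsto_add_smul_of_tendsto_zero {α : Type*} {l : Filter α} {t : α → ℝ} {q : α → V}
    {d : V} (ht : Tendsto t l (𝓝 0)) (hq : Tendsto q l (𝓝 d)) (y : V) :
    Tendsto (fun a => y + t a • q a) l (𝓝 y) := by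
  simpa using tendsto_const_nhds.add (ht.smul hq)

lemma EReal.liminf_coe_add_le {α : Type*} {l : Filter α} [l.NeBot] {e : α → ℝ}
    (he : Tendsto e l (𝓝 0)) (u : α → EReal) :
    liminf (fun a => (e a : EReal) + u a) l ≤ liminf u l := by
  have he' : limsup (fun a => (e a : EReal)) l = 0 :=
    (EReal.tendsto_coe.mpr he).limsup_eq
  have h := EReal.liminf_add_le (f := l) (u := fun a => (e a : EReal)) (v := u)
    (.inl (by simp [he'])) (.inl (by simp [he']))
  rwa [he', zero_add] at h

lemma HasSemiderivAt.liminf_diffQuotient_le {F : E → V} {x w : E} {d : V}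
    (hF : HasSemiderivAt F x w d) (g : V → EReal) :
    liminf (diffQuotient g (F x)) (𝓝[>] 0 ×ˢ 𝓝 d) ≤
      liminf (diffQuotient (fun z => g (F z)) x) (𝓝[>] 0 ×ˢ 𝓝 w) :=
  calc liminf (diffQuotient g (F x)) (𝓝[>] 0 ×ˢ 𝓝 d)
      ≤ liminf (diffQuotient g (F x) ∘ fun p => (p.1, p.1⁻¹ • (F (x + p.1 • p.2) - F x)))
          (𝓝[>] 0 ×ˢ 𝓝 w) := (tendsto_fst.prodMk hF).liminf_le_liminf_comp
    _ = _ := liminf_congr <| (eventually_fst_pos _).mono fun p hp =>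
        (diffQuotient_comp g F x hp.ne' p.2).symm

lemma HasSemiderivAt.exists_tendsto_of_infDist_le {F : E → V} {x w : E} {d : V}
    {S : Set E} {D : Set V} {κ : ℝ} (hF : HasSemiderivAt F x w d) (hS : S.Nonempty)
    (hκ : 0 ≤ κ)
    (hsub : ∀ᶠ t in 𝓝[>] (0 : ℝ), infDist (x + t • w) S ≤ κ * infDist (F (x + t • w)) D) :
    ∃ ψ : ℝ × V → E, Tendsto ψ (𝓝[>] 0 ×ˢ 𝓝 d) (𝓝 w) ∧
      ∀ p : ℝ × V, 0 < p.1 → F x + p.1 • p.2 ∈ D → x + p.1 • ψ p ∈ S := by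
  classical
  -- the slack `t * t = o(t)` stands in for a nearest point of `S`, which need not exist
  have hnear : ∀ t : ℝ, 0 < t → ∃ z ∈ S, dist (x + t • w) z < infDist (x + t • w) S + t * t :=
    fun t ht => (infDist_lt_iff hS).mp (lt_add_of_pos_right _ (mul_pos ht ht))
  choose! z hzS hz using hnear
  let ψ : ℝ × V → E := fun p => if F x + p.1 • p.2 ∈ D then p.1⁻¹ • (z p.1 - x) else w
  refine ⟨ψ, ?_, fun p hp hD => by simpa [ψ, hD, smul_inv_smul₀ hp.ne'] using hzS p.1 hp⟩
  set N : ℝ × V → ℝ := fun p => ‖p.1⁻¹ • (F (x + p.1 • w) - F x) - p.2‖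
  have hbound : ∀ᶠ p in 𝓝[>] 0 ×ˢ 𝓝 d, ‖ψ p - w‖ ≤ κ * N p + p.1 := by
    filter_upwards [eventually_fst_pos _, tendsto_fst.eventually hsub] with ⟨t, v⟩ ht hsub_t
    dsimp only at ht hsub_t
    by_cases hD : F x + t • v ∈ D
    · have hFD : infDist (F (x + t • w)) D ≤ t * N (t, v) := by
        refine (infDist_le_dist_of_mem hD).trans_eq ?_
        rw [dist_eq_norm, show F (x + t • w) - (F x + t • v) =
            t • (t⁻¹ • (F (x + t • w) - F x) - v) by rw [smul_sub, smul_inv_smul₀ ht.ne']; abel,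
          norm_smul, Real.norm_of_nonneg ht.le]
      calc ‖ψ (t, v) - w‖ = t⁻¹ * dist (x + t • w) (z t) := by
            rw [dist_comm, dist_eq_norm, ← abs_of_pos (inv_pos.mpr ht), ← Real.norm_eq_abs,
              ← norm_smul, smul_sub, smul_add, inv_smul_smul₀ ht.ne']
            simp only [ψ, hD, if_true, smul_sub]
            congr 1
            abel
        _ ≤ t⁻¹ * (κ * (t * N (t, v)) + t * t) := by
            gcongr
            exact (hz t ht).le.trans (by gcongr; exact hsub_t.trans (by gcongr))
        _ = κ * N (t, v) + t := by field_simp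
    · simp only [ψ, hD, if_false, sub_self, norm_zero]
      positivity
  have hN : Tendsto N (𝓝[>] 0 ×ˢ 𝓝 d) (𝓝 0) := by
    have hradial := hF.comp (tendsto_id.prodMk (tendsto_const_nhds (x := w)))
    simpa using ((hradial.comp tendsto_fst).sub
      (tendsto_snd : Tendsto Prod.snd (𝓝[>] (0 : ℝ) ×ˢ 𝓝 d) (𝓝 d))).norm
  have ht : Tendsto (fun p : ℝ × V => p.1) (𝓝[>] 0 ×ˢ 𝓝 d) (𝓝 0) :=
    tendsto_fst.mono_right nhdsWithin_le_nhds
  rw [← tendsto_sub_nhds_zero_iff, tendsto_zero_iff_norm_tendsto_zero]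
  refine squeeze_zero' (.of_forall fun _ => norm_nonneg _) hbound ?_
  simpa using (hN.const_mul κ).add ht

lemma diffQuotient_le_of_lipschitzOnWith (g : V → EReal) {y q v : V} {U : Set V} {K : NNReal}
    {t : ℝ} (hg_ne_bot : ∀ y, g y ≠ ⊥) (hy : g y ≠ ⊤)
    (hLip : LipschitzOnWith K (fun y => (g y).toReal) ({y | g y ≠ ⊤} ∩ U)) (ht : 0 < t)
    (hqU : y + t • q ∈ U) (hvU : y + t • v ∈ U) (hdom : g (y + t • v) ≠ ⊤ → g (y + t • q) ≠ ⊤) :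
    diffQuotient g y (t, q) ≤ ((K * ‖q - v‖ : ℝ) : EReal) + diffQuotient g y (t, v) := by
  lift g y to ℝ using ⟨hy, hg_ne_bot y⟩ with c hc
  by_cases hv : g (y + t • v) = ⊤
  · have htop : diffQuotient g y (t, v) = ⊤ := by
      simp only [diffQuotient, hv, ← hc, EReal.top_sub_coe]
      exact EReal.coe_mul_top_of_pos (inv_pos.mpr ht)
    rw [htop, EReal.coe_add_top]
    exact le_top
  have hq := hdom hv
  have hLip' := hLip.le_add_mul ⟨hq, hqU⟩ ⟨hv, hvU⟩
  lift g (y + t • q) to ℝ using ⟨hq, hg_ne_bot _⟩ with a ha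
  lift g (y + t • v) to ℝ using ⟨hv, hg_ne_bot _⟩ with b hb
  rw [EReal.toReal_coe, EReal.toReal_coe, dist_eq_norm, add_sub_add_left_eq_sub,
    ← smul_sub, norm_smul, Real.norm_of_nonneg ht.le] at hLip'
  simp only [diffQuotient, ← ha, ← hb, ← hc]
  norm_cast
  calc t⁻¹ * (a - c) ≤ t⁻¹ * (K * (t * ‖q - v‖) + (b - c)) := by gcongr; linarith
    _ = K * ‖q - v‖ + t⁻¹ * (b - c) := by field_simp

lemma HasSemiderivAt.liminf_diffQuotient_comp_le {F : E → V} {x w : E} {d : V}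
    (hF : HasSemiderivAt F x w d) (g : V → EReal) {U : Set V} {K : NNReal} {κ : ℝ}
    (hg_ne_bot : ∀ y, g y ≠ ⊥) (hfin : g (F x) ≠ ⊤) (hU : U ∈ 𝓝 (F x))
    (hLip : LipschitzOnWith K (fun y => (g y).toReal) ({y | g y ≠ ⊤} ∩ U)) (hκ : 0 ≤ κ)
    (hsub : ∀ᶠ t in 𝓝[>] (0 : ℝ),
      infDist (x + t • w) {z | g (F z) ≠ ⊤} ≤ κ * infDist (F (x + t • w)) {y | g y ≠ ⊤}) :
    liminf (diffQuotient (fun z => g (F z)) x) (𝓝[>] 0 ×ˢ 𝓝 w) ≤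
      liminf (diffQuotient g (F x)) (𝓝[>] 0 ×ˢ 𝓝 d) := by
  obtain ⟨ψ, hψ, hψdom⟩ := hF.exists_tendsto_of_infDist_le ⟨x, hfin⟩ hκ hsub
  set q : ℝ × V → V := fun p => p.1⁻¹ • (F (x + p.1 • ψ p) - F x)
  have hq : Tendsto q (𝓝[>] 0 ×ˢ 𝓝 d) (𝓝 d) := hF.comp (tendsto_fst.prodMk hψ)
  have ht : Tendsto (fun p : ℝ × V => p.1) (𝓝[>] 0 ×ˢ 𝓝 d) (𝓝 0) :=
    tendsto_fst.mono_right nhdsWithin_le_nhds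
  have herr : Tendsto (fun p => K * ‖q p - p.2‖) (𝓝[>] 0 ×ˢ 𝓝 d) (𝓝 0) := by
    simpa using ((hq.sub tendsto_snd).norm.const_mul (K : ℝ))
  calc liminf (diffQuotient (fun z => g (F z)) x) (𝓝[>] 0 ×ˢ 𝓝 w)
      ≤ liminf (diffQuotient (fun z => g (F z)) x ∘ fun p => (p.1, ψ p)) (𝓝[>] 0 ×ˢ 𝓝 d) :=
        (tendsto_fst.prodMk hψ).liminf_le_liminf_comp
    _ = liminf (fun p => diffQuotient g (F x) (p.1, q p)) (𝓝[>] 0 ×ˢ 𝓝 d) :=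
        liminf_congr <| (eventually_fst_pos _).mono fun p hp => diffQuotient_comp g F x hp.ne' _
    _ ≤ liminf (fun p => ((K * ‖q p - p.2‖ : ℝ) : EReal) + diffQuotient g (F x) p)
          (𝓝[>] 0 ×ˢ 𝓝 d) := by
        refine liminf_le_liminf ?_
        filter_upwards [eventually_fst_pos _, tendsto_add_smul_of_tendsto_zero ht hq (F x) hU,
          tendsto_add_smul_of_tendsto_zero ht tendsto_snd (F x) hU] with p hp hqU hvU
        refine diffQuotient_le_of_lipschitzOnWith g hg_ne_bot hfin hLip hp hqU hvU fun hv => ?_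
        simpa [q, smul_inv_smul₀ hp.ne'] using hψdom p hp hv
    _ ≤ liminf (diffQuotient g (F x)) (𝓝[>] 0 ×ˢ 𝓝 d) := EReal.liminf_coe_add_le herr _

end

/-- exact subderivative chain rule for `f = g ∘ F` under relative Lipschitz
continuity of `g`, semi-differentiability of `F` at `x̄` for `w`, and the directional
metric subregularity qualification condition at `x̄` in direction `w`. -/
theorem subderivative_chain_rule {n m : ℕ}
    (g : EuclideanSpace ℝ (Fin m) → EReal)
    (F : EuclideanSpace ℝ (Fin n) → EuclideanSpace ℝ (Fin m))
    (x w : EuclideanSpace ℝ (Fin n)) (dFw : EuclideanSpace ℝ (Fin m))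
    -- `g` takes values in ℝ ∪ {+∞}
    (hg_ne_bot : ∀ y, g y ≠ ⊥)
    -- `f = g ∘ F` is finite at `x̄`
    (hfin : g (F x) ≠ ⊤)
    -- `g` is Lipschitz continuous around `F x̄` relative to its domain
    (hLip : ∃ ℓ : ℝ, 0 ≤ ℓ ∧ ∃ U ∈ 𝓝 (F x), ∀ y ∈ {y | g y ≠ ⊤} ∩ U,
      ∀ u ∈ {y | g y ≠ ⊤} ∩ U, |(g y).toReal - (g u).toReal| ≤ ℓ * ‖y - u‖)
    -- `F` is semi-differentiable at `x̄` for the direction `w`, with semi-derivative `dFw`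
    (hF : HasSemiderivAt F x w dFw)
    -- directional metric subregularity qualification condition at `x̄` in direction `w`
    (hMSQC : ∃ κ > (0:ℝ), ∃ ε > (0:ℝ), ∀ t ∈ Set.Icc (0:ℝ) ε,
      Metric.infDist (x + t • w) {z | g (F z) ≠ ⊤} ≤
        κ * Metric.infDist (F (x + t • w)) {y | g y ≠ ⊤}) :
    subderiv (fun z => g (F z)) x w = subderiv g (F x) dFw := by
  obtain ⟨ℓ, -, U, hU, hLipU⟩ := hLip
  obtain ⟨κ, hκ, ε, hε, hsub⟩ := hMSQC
  have hLip' : LipschitzOnWith (Real.toNNReal ℓ) (fun y => (g y).toReal) ({y | g y ≠ ⊤} ∩ U) :=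
    .of_dist_le' fun y hy u hu => by simpa [Real.dist_eq, dist_eq_norm] using hLipU y hy u hu
  have hsub' : ∀ᶠ t in 𝓝[>] (0 : ℝ),
      infDist (x + t • w) {z | g (F z) ≠ ⊤} ≤ κ * infDist (F (x + t • w)) {y | g y ≠ ⊤} := by
    filter_upwards [Ioc_mem_nhdsGT hε] with t ht using hsub t (Ioc_subset_Icc_self ht)
  exact le_antisymm (hF.liminf_diffQuotient_comp_le g hg_ne_bot hfin hU hLip' hκ.le hsub')
    (hF.liminf_diffQuotient_le g)
end

section
/- Let g : ℝᵐ → ℝ ∪ {+∞}, let F : ℝⁿ → ℝᵐ be semi-differentiable at x̄ for the direction w, and suppose f := g ∘ F is finite at x̄. Then, without any qualification condition, the lower estimate d(g ∘ F)(x̄)(w) ≥ dg(F(x̄))(dF(x̄)(w)) holds. -/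
open Filter Topology Set

/-- the lower estimate `d(g ∘ F)(x̄)(w) ≥ dg(F(x̄))(dF(x̄)(w))` holds with no
qualification condition, whenever `F` is semi-differentiable at `x̄` for `w` and
`f = g ∘ F` is finite at `x̄`. -/
theorem subderivative_chain_rule_lower_estimate {n m : ℕ}
    (g : EuclideanSpace ℝ (Fin m) → EReal)
    (F : EuclideanSpace ℝ (Fin n) → EuclideanSpace ℝ (Fin m))
    (x w : EuclideanSpace ℝ (Fin n)) (dFw : EuclideanSpace ℝ (Fin m))
    -- `g` takes values in ℝ ∪ {+∞}
    (hg_ne_bot : ∀ y, g y ≠ ⊥)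
    -- `f = g ∘ F` is finite at `x̄`
    (hfin : g (F x) ≠ ⊤)
    -- `F` is semi-differentiable at `x̄` for the direction `w`, with semi-derivative `dFw`
    (hF : HasSemiderivAt F x w dFw) :
    subderiv g (F x) dFw ≤ subderiv (fun z => g (F z)) x w := by
  set l := (𝓝[>] (0:ℝ)) ×ˢ (𝓝 w)
  set l' := (𝓝[>] (0:ℝ)) ×ˢ (𝓝 dFw)
  set φ : ℝ × EuclideanSpace ℝ (Fin n) → ℝ × EuclideanSpace ℝ (Fin m) :=
    fun p => (p.1, (p.1)⁻¹ • (F (x + p.1 • p.2) - F x)) with hφdef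
  have hφ : Tendsto φ l l' := tendsto_fst.prodMk hF
  set u : ℝ × EuclideanSpace ℝ (Fin m) → EReal :=
    fun p => (((p.1)⁻¹ : ℝ) : EReal) * (g (F x + p.1 • p.2) - g (F x)) with hu
  have hmap : Filter.map φ l ≤ l' := hφ
  have h1 : subderiv g (F x) dFw ≤ Filter.liminf u (Filter.map φ l) :=
    Filter.liminf_le_liminf_of_le hmap
  have h2 : Filter.liminf u (Filter.map φ l) = Filter.liminf (u ∘ φ) l :=
    (Filter.liminf_comp u φ l).symm
  have hpos : ∀ᶠ p : ℝ × EuclideanSpace ℝ (Fin n) in l, 0 < p.1 :=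
    Filter.Eventually.prod_inl self_mem_nhdsWithin _
  have h3 : Filter.liminf (u ∘ φ) l = subderiv (fun z => g (F z)) x w := by
    apply Filter.liminf_congr
    filter_upwards [hpos] with p hp
    have ht : p.1 ≠ 0 := ne_of_gt hp
    simp only [u, φ, Function.comp_apply, smul_inv_smul₀ ht, add_sub_cancel]
  calc subderiv g (F x) dFw ≤ Filter.liminf u (Filter.map φ l) := h1
    _ = Filter.liminf (u ∘ φ) l := h2
    _ = subderiv (fun z => g (F z)) x w := h3
end

section
/- Let A be a real m × n matrix and b ∈ ℝᵐ, and define f(x) := ‖Ax + b‖₀, the number of nonzero components of Ax + b. Then for every x, w ∈ ℝⁿ, the ordinary directional derivative limit lim_{t↓0}(f(x + t w) − f（x))/t exists in [−∞, +∞] and equals the subderivative df(x)(w); moreover df(x)(w) = 0 if S(Aw) ⊆ S(Ax + b) and df(x)(w) = +∞ otherwise, where S(y) := {i : yᵢ ≠ 0} denotes the support of y ∈ ℝᵐ. -/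
open Filter Topology Set

/-- The zero "norm" composed with an affine map: `f(x) = ‖Ax + b‖₀`, viewed as an
extended-real-valued function. -/
noncomputable def zeroNormAffine {n m : ℕ} (A : Matrix (Fin m) (Fin n) ℝ)
    (b : Fin m → ℝ) (z : EuclideanSpace ℝ (Fin n)) : EReal :=
  ((Set.ncard {i : Fin m | A.mulVec z i + b i ≠ 0} : ℝ) : EReal)

/-!
With `c = Ax + b`, the difference quotient is `t⁻¹ (‖c + t Aw'‖₀ - ‖c‖₀)`. Nonzero coordinates
stay nonzero under small perturbations, so for `(t, w')` near `(0⁺, w)` the support of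
`c + t Aw'` contains that of `c` and the quotient is `≥ 0`. If `S(Aw) ⊆ S(c)`, the support does
not change along the ray `t ↦ x + t w`, so the quotient vanishes there and the liminf is `0`.
Otherwise some coordinate with `cᵢ = 0 ≠ (Aw)ᵢ` is switched on, the quotient is `≥ t⁻¹`, and
everything tends to `+∞`.
-/

open Function

theorem Filter.liminf_eq_of_eventually_ge_of_tendsto_comp {α β γ : Type*}
    [CompleteLinearOrder γ] [TopologicalSpace γ] [OrderTopology γ]
    {f : α → γ} {l : Filter α} {g : β → α} {l' : Filter β} [l'.NeBot] {a : γ}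
    (hg : Tendsto g l' l) (hge : ∀ᶠ x in l, a ≤ f x) (hlim : Tendsto (f ∘ g) l' (𝓝 a)) :
    liminf f l = a :=
  le_antisymm
    (calc liminf f l ≤ liminf f (map g l') := liminf_le_liminf_of_le hg
      _ = a := (liminf_comp f g l').symm.trans hlim.liminf_eq)
    (le_liminf_of_le (by isBoundedDefault) hge)

theorem eventually_support_subset_nhds {ι M : Type*} [Finite ι] [Zero M] [TopologicalSpace M]
    [T1Space M] (y : ι → M) : ∀ᶠ z in 𝓝 y, support y ⊆ support z := by
  have hcoord : ∀ i ∈ support y, ∀ᶠ z in 𝓝 y, z i ≠ 0 := fun i hi =>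
    ((continuous_apply i).tendsto y).eventually_ne hi
  exact (eventually_all_finite (toFinite _)).2 hcoord

section ZeroNorm

variable {ι : Type*} [Finite ι]

noncomputable def zeroNormDiffQuot (c : ι → ℝ) (t : ℝ) (v : ι → ℝ) : ℝ :=
  t⁻¹ * ((support (c + t • v)).ncard - (support c).ncard)

variable {α : Type*} {l : Filter α} {τ : α → ℝ} {v : α → ι → ℝ} {c d : ι → ℝ}

theorem eventually_support_subset_support_add_smul (hτ : Tendsto τ l (𝓝 0))
    (hv : Tendsto v l (𝓝 d)) : ∀ᶠ a in l, support c ⊆ support (c + τ a • v a) := by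
  have hlim : Tendsto (fun a => c + τ a • v a) l (𝓝 c) := by
    simpa using tendsto_const_nhds.add (hτ.smul hv)
  exact hlim.eventually (eventually_support_subset_nhds c)

theorem eventually_zeroNormDiffQuot_nonneg (hτ : Tendsto τ l (𝓝[>] 0))
    (hv : Tendsto v l (𝓝 d)) : ∀ᶠ a in l, 0 ≤ zeroNormDiffQuot c (τ a) (v a) := by
  filter_upwards [eventually_support_subset_support_add_smul
      (hτ.mono_right nhdsWithin_le_nhds) hv, hτ.eventually eventually_mem_nhdsWithin]
    with a hsub hpos
  have hle : ((support c).ncard : ℝ) ≤ (support (c + τ a • v a)).ncard := by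
    exact_mod_cast ncard_le_ncard hsub
  exact mul_nonneg (inv_nonneg.2 (le_of_lt hpos)) (sub_nonneg.2 hle)

theorem eventually_zeroNormDiffQuot_eq_zero (hdc : support d ⊆ support c) :
    ∀ᶠ t in 𝓝 (0 : ℝ), zeroNormDiffQuot c t d = 0 := by
  filter_upwards [eventually_support_subset_support_add_smul (c := c) tendsto_id
      (tendsto_const_nhds (x := d))] with t hsub
  have hsup : support (c + t • d) ⊆ support c := fun i hi =>
    (support_add c (t • d) hi).elim id fun hi => hdc (support_const_smul_subset t d hi)
  simp [zeroNormDiffQuot, hsup.antisymm hsub]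

theorem eventually_ncard_support_add_smul_ge (hτ : Tendsto τ l (𝓝[>] 0))
    (hv : Tendsto v l (𝓝 d)) (hdc : ¬ support d ⊆ support c) :
    ∀ᶠ a in l, (support c).ncard + 1 ≤ (support (c + τ a • v a)).ncard := by
  obtain ⟨i, hdi, hci⟩ := not_subset.1 hdc
  filter_upwards [eventually_support_subset_support_add_smul
      (hτ.mono_right nhdsWithin_le_nhds) hv, hτ.eventually eventually_mem_nhdsWithin,
      ((continuous_apply i).tendsto d).comp hv |>.eventually_ne hdi] with a hsub hpos hvi
  have hi : c i + τ a * v a i ≠ 0 := by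
    rw [notMem_support.1 hci, zero_add]
    exact mul_ne_zero (ne_of_gt hpos) hvi
  rw [← ncard_insert_of_notMem hci]
  exact ncard_le_ncard (insert_subset hi hsub)

theorem tendsto_zeroNormDiffQuot_atTop (hτ : Tendsto τ l (𝓝[>] 0))
    (hv : Tendsto v l (𝓝 d)) (hdc : ¬ support d ⊆ support c) :
    Tendsto (fun a => zeroNormDiffQuot c (τ a) (v a)) l atTop := by
  refine tendsto_atTop_mono' l ?_ (tendsto_inv_nhdsGT_zero.comp hτ)
  filter_upwards [eventually_ncard_support_add_smul_ge hτ hv hdc,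
    hτ.eventually eventually_mem_nhdsWithin] with a hge hpos
  have hone : (1 : ℝ) ≤ (support (c + τ a • v a)).ncard - (support c).ncard := by
    have : ((support c).ncard : ℝ) + 1 ≤ (support (c + τ a • v a)).ncard := by exact_mod_cast hge
    linarith
  simpa [zeroNormDiffQuot] using mul_le_mul_of_nonneg_left hone (inv_nonneg.2 (le_of_lt hpos))

end ZeroNorm

theorem zeroNormAffine_diffQuot_eq {n m : ℕ} (A : Matrix (Fin m) (Fin n) ℝ) (b : Fin m → ℝ)
    (x v : EuclideanSpace ℝ (Fin n)) (t : ℝ) :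
    ((t⁻¹ : ℝ) : EReal) * (zeroNormAffine A b (x + t • v) - zeroNormAffine A b x) =
      zeroNormDiffQuot (A.mulVec x + b) t (A.mulVec v) := by
  have hsupp : support (A.mulVec (x + t • v) + b) = support (A.mulVec x + b + t • A.mulVec v) := by
    rw [Matrix.mulVec_add, Matrix.mulVec_smul, add_right_comm]
  change _ * ((((support (A.mulVec (x + t • v) + b)).ncard : ℝ) : EReal)
    - (((support (A.mulVec x + b)).ncard : ℝ) : EReal)) = _
  rw [hsupp, zeroNormDiffQuot, ← EReal.coe_sub, ← EReal.coe_mul]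

/-- for `f(x) = ‖Ax + b‖₀`, the ordinary directional derivative limit
exists (in `[−∞, +∞]`) and equals the subderivative `df(x)(w)`; moreover
`df(x)(w) = 0` if `S(Aw) ⊆ S(Ax + b)` and `df(x)(w) = +∞` otherwise. -/
theorem zero_norm_directionally_lower_regular {n m : ℕ}
    (A : Matrix (Fin m) (Fin n) ℝ) (b : Fin m → ℝ)
    (x w : EuclideanSpace ℝ (Fin n)) :
    Filter.Tendsto
        (fun t : ℝ => ((t⁻¹ : ℝ) : EReal) * (zeroNormAffine A b (x + t • w) - zeroNormAffine A b x))
        (𝓝[>] (0:ℝ)) (𝓝 (subderiv (zeroNormAffine A b) x w)) ∧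
      ({i : Fin m | A.mulVec w i ≠ 0} ⊆ {i : Fin m | A.mulVec x i + b i ≠ 0} →
        subderiv (zeroNormAffine A b) x w = 0) ∧
      (¬ {i : Fin m | A.mulVec w i ≠ 0} ⊆ {i : Fin m | A.mulVec x i + b i ≠ 0} →
        subderiv (zeroNormAffine A b) x w = ⊤) := by
  set q := fun p : ℝ × EuclideanSpace ℝ (Fin n) =>
    (zeroNormDiffQuot (A.mulVec x + b) p.1 (A.mulVec p.2) : EReal)
  have hsubderiv : subderiv (zeroNormAffine A b) x w = liminf q (𝓝[>] 0 ×ˢ 𝓝 w) := by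
    simp only [subderiv, zeroNormAffine_diffQuot_eq, q]
  have hray : Tendsto (fun t : ℝ => (t, w)) (𝓝[>] 0) (𝓝[>] 0 ×ˢ 𝓝 w) :=
    tendsto_id.prodMk tendsto_const_nhds
  have hfst : Tendsto Prod.fst (𝓝[>] (0 : ℝ) ×ˢ 𝓝 w) (𝓝[>] 0) := tendsto_fst
  have hmulVec : Tendsto (fun p : ℝ × EuclideanSpace ℝ (Fin n) => A.mulVec p.2)
      (𝓝[>] 0 ×ˢ 𝓝 w) (𝓝 (A.mulVec w)) :=
    ((continuous_const.matrix_mulVec (PiLp.continuous_ofLp 2 _)).tendsto w).comp tendsto_snd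
  simp only [zeroNormAffine_diffQuot_eq, hsubderiv]
  by_cases hS : support (A.mulVec w) ⊆ support (A.mulVec x + b)
  · have hray0 : Tendsto (q ∘ fun t : ℝ => (t, w)) (𝓝[>] 0) (𝓝 0) := by
      refine tendsto_const_nhds.congr' ?_
      filter_upwards [nhdsWithin_le_nhds (eventually_zeroNormDiffQuot_eq_zero hS)] with t ht
      simp [q, ht]
    have hge : ∀ᶠ p in 𝓝[>] 0 ×ˢ 𝓝 w, (0 : EReal) ≤ q p := by
      filter_upwards [eventually_zeroNormDiffQuot_nonneg hfst hmulVec] with p hp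
      exact EReal.coe_nonneg.2 hp
    have hlim := liminf_eq_of_eventually_ge_of_tendsto_comp hray hge hray0
    exact ⟨hlim ▸ hray0, fun _ => hlim, fun h => absurd hS h⟩
  · have htop : Tendsto q (𝓝[>] 0 ×ˢ 𝓝 w) (𝓝 ⊤) :=
      EReal.tendsto_coe_atTop.comp (tendsto_zeroNormDiffQuot_atTop hfst hmulVec hS)
    exact ⟨htop.liminf_eq ▸ htop.comp hray, fun h => absurd h hS, fun _ => htop.liminf_eq⟩
end

section
/- Let X ⊆ ℝⁿ be a nonempty closed set that is geometrically derivable at x̄ ∈ X, and let f(x) := dist(x, X). Then f is semi-differentiable at x̄ and its semi-derivative is df(x̄)(w) = dist(w, T_X(x̄)) for every w ∈ ℝⁿ; that is, the full limit lim_{t↓0, w'→w} (dist(x̄ + t w', X) − 0)/t exists and equals dist(w, T_X(x̄)). -/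
open Filter Topology Set

/-- The (Bouligand) tangent cone `T_X(x)`: all `w` such that `x + t k • v k ∈ X` for
some `t k ↓ 0` and `v k → w`. -/
def tangentConeAt' {E : Type*} [NormedAddCommGroup E] [NormedSpace ℝ E]
    (X : Set E) (x : E) : Set E :=
  {w | ∃ (t : ℕ → ℝ) (v : ℕ → E),
    Filter.Tendsto t Filter.atTop (𝓝[>] (0:ℝ)) ∧
    Filter.Tendsto v Filter.atTop (𝓝 w) ∧ ∀ k, x + t k • v k ∈ X}

/-- `X` is geometrically derivable at `x ∈ X`: every tangent vector `w ∈ T_X(x)` is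
derivable, i.e. realized as the right derivative at `0` of a curve `ζ : [0, ε] → X`
with `ζ 0 = x`. -/
def GeomDerivableAt {E : Type*} [NormedAddCommGroup E] [NormedSpace ℝ E]
    (X : Set E) (x : E) : Prop :=
  ∀ w ∈ tangentConeAt' X x, ∃ ε > (0:ℝ), ∃ ζ : ℝ → E,
    ζ 0 = x ∧ (∀ t ∈ Set.Icc (0:ℝ) ε, ζ t ∈ X) ∧
    Filter.Tendsto (fun t : ℝ => t⁻¹ • (ζ t - x)) (𝓝[>] (0:ℝ)) (𝓝 w)

/-!
Since `dist(x̄ + t w', X) / t = dist(w', (X - x̄) / t)`, the theorem says that the rescaled sets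
`(X - x̄) / t` converge to `T_X(x̄)`. For the upper bound, a tangent vector `u` close to `w` is
realized by a curve `ζ` in `X`, and `(ζ t - x̄) / t → u` is a point of `(X - x̄) / t` close to
`w'`. For the lower bound, if `dist(x̄ + t w', X) / t < r` along `t_k ↓ 0`, `w'_k → w`, there are
points `v_k ∈ (X - x̄) / t_k` with `‖w'_k - v_k‖ < r`; they are bounded, so by compactness a
subsequence converges to some `u ∈ T_X(x̄)` with `‖w - u‖ ≤ r`.
-/

section TangentCone

variable {E : Type*} [NormedAddCommGroup E] [NormedSpace ℝ E]

theorem dist_add_smul_eq_mul_norm_sub {t : ℝ} (ht : 0 < t) (x v y : E) :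
    dist (x + t • v) y = t * ‖v - t⁻¹ • (y - x)‖ := by
  have hxy : x + t • v - y = t • (v - t⁻¹ • (y - x)) := by
    rw [smul_sub, smul_inv_smul₀ ht.ne']
    abel
  rw [dist_eq_norm, hxy, norm_smul, Real.norm_of_nonneg ht.le]

theorem inv_mul_infDist_add_smul_le {X : Set E} {x y : E} (hy : y ∈ X) {t : ℝ} (ht : 0 < t)
    (v : E) : t⁻¹ * Metric.infDist (x + t • v) X ≤ ‖v - t⁻¹ • (y - x)‖ := by
  rw [inv_mul_le_iff₀ ht, ← dist_add_smul_eq_mul_norm_sub ht]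
  exact Metric.infDist_le_dist_of_mem hy

theorem exists_norm_sub_lt_of_inv_mul_infDist_lt {X : Set E} (hX : X.Nonempty) {x v : E}
    {t r : ℝ} (ht : 0 < t) (h : t⁻¹ * Metric.infDist (x + t • v) X < r) :
    ∃ y ∈ X, ‖v - t⁻¹ • (y - x)‖ < r := by
  rw [inv_mul_lt_iff₀ ht, Metric.infDist_lt_iff hX] at h
  obtain ⟨y, hy, hdist⟩ := h
  rw [dist_add_smul_eq_mul_norm_sub ht] at hdist
  exact ⟨y, hy, lt_of_mul_lt_mul_left hdist ht.le⟩

theorem zero_mem_tangentConeAt' {X : Set E} {x : E} (hx : x ∈ X) :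
    (0 : E) ∈ tangentConeAt' X x := by
  refine ⟨fun k => ((k : ℝ) + 1)⁻¹, fun _ => 0, ?_, tendsto_const_nhds, by simp [hx]⟩
  refine tendsto_nhdsWithin_of_tendsto_nhds_of_eventually_within _ ?_
    (Eventually.of_forall fun k => Set.mem_Ioi.2 (by positivity))
  simpa only [one_div] using tendsto_one_div_add_atTop_nhds_zero_nat (𝕜 := ℝ)

theorem exists_mem_tangentConeAt'_tendsto_subseq [ProperSpace E] {X : Set E} {x : E}
    {t : ℕ → ℝ} {v : ℕ → E} (ht : Tendsto t atTop (𝓝[>] 0))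
    (hv : Bornology.IsBounded (range v)) (hX : ∀ k, x + t k • v k ∈ X) :
    ∃ u ∈ tangentConeAt' X x, ∃ φ : ℕ → ℕ, StrictMono φ ∧ Tendsto (v ∘ φ) atTop (𝓝 u) := by
  obtain ⟨u, -, φ, hφ, hvφ⟩ := tendsto_subseq_of_bounded hv (mem_range_self (f := v))
  exact ⟨u, ⟨t ∘ φ, v ∘ φ, ht.comp hφ.tendsto_atTop, hvφ, fun k => hX (φ k)⟩, φ, hφ, hvφ⟩

theorem eventually_inv_mul_infDist_lt_of_curve {X : Set E} {x u w : E} {ε b : ℝ} {ζ : ℝ → E}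
    (hε : 0 < ε) (hζX : ∀ t ∈ Icc 0 ε, ζ t ∈ X)
    (hζ : Tendsto (fun t : ℝ => t⁻¹ • (ζ t - x)) (𝓝[>] 0) (𝓝 u)) (hb : dist w u < b) :
    ∀ᶠ p : ℝ × E in 𝓝[>] 0 ×ˢ 𝓝 w, p.1⁻¹ * Metric.infDist (x + p.1 • p.2) X < b := by
  have hquot : Tendsto (fun p : ℝ × E => ‖p.2 - p.1⁻¹ • (ζ p.1 - x)‖) (𝓝[>] 0 ×ˢ 𝓝 w)
      (𝓝 (dist w u)) := by
    rw [dist_eq_norm]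
    exact (tendsto_snd.sub (hζ.comp tendsto_fst)).norm
  have hsmall : ∀ᶠ p : ℝ × E in 𝓝[>] 0 ×ˢ 𝓝 w, p.1 ∈ Ioo 0 ε :=
    tendsto_fst.eventually (Ioo_mem_nhdsGT hε)
  filter_upwards [hquot.eventually_lt_const hb, hsmall] with p hpb hp
  exact (inv_mul_infDist_add_smul_le (hζX p.1 (Ioo_subset_Icc_self hp)) hp.1 p.2).trans_lt hpb

theorem eventually_le_inv_mul_infDist [ProperSpace E] {X : Set E} {x : E} (hx : x ∈ X)
    {w : E} {r : ℝ} (hr : r < Metric.infDist w (tangentConeAt' X x)) :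
    ∀ᶠ p : ℝ × E in 𝓝[>] 0 ×ˢ 𝓝 w, r ≤ p.1⁻¹ * Metric.infDist (x + p.1 • p.2) X := by
  by_contra hfreq
  have hpos : ∀ᶠ p : ℝ × E in 𝓝[>] 0 ×ˢ 𝓝 w, 0 < p.1 :=
    tendsto_fst.eventually self_mem_nhdsWithin
  obtain ⟨p, hp, hpr⟩ := exists_seq_forall_of_frequently <|
    hpos.and_frequently (not_eventually.1 hfreq |>.mono fun _ h => not_le.1 h)
  obtain ⟨ht, hw⟩ := tendsto_prod_iff'.1 hp
  choose y hyX hy using fun k =>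
    exists_norm_sub_lt_of_inv_mul_infDist_lt ⟨x, hx⟩ (hpr k).1 (hpr k).2
  set v : ℕ → E := fun k => (p k).1⁻¹ • (y k - x)
  have hv : Bornology.IsBounded (range v) := by
    obtain ⟨C, hC⟩ := (Metric.isBounded_range_of_tendsto _ hw).exists_norm_le
    refine isBounded_iff_forall_norm_le.2 ⟨C + r, forall_mem_range.2 fun k => ?_⟩
    calc ‖v k‖ ≤ ‖(p k).2‖ + ‖(p k).2 - v k‖ := norm_le_insert _ _
      _ ≤ C + r := add_le_add (hC _ (mem_range_self k)) (hy k).le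
  have hvX : ∀ k, x + (p k).1 • v k ∈ X := fun k => by
    simpa only [v, smul_inv_smul₀ (hpr k).1.ne', add_sub_cancel] using hyX k
  obtain ⟨u, huT, φ, hφ, hvφ⟩ := exists_mem_tangentConeAt'_tendsto_subseq ht hv hvX
  have hwu : dist w u ≤ r := by
    rw [dist_eq_norm]
    exact le_of_tendsto ((hw.comp hφ.tendsto_atTop).sub hvφ).norm
      (Eventually.of_forall fun k => (hy (φ k)).le)
  exact absurd ((Metric.infDist_le_dist_of_mem huT).trans hwu) (not_le.2 hr)

end TangentCone

theorem dist_semidifferentiable_of_geomDerivable_general {n : ℕ}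
    (X : Set (EuclideanSpace ℝ (Fin n)))
    (x : EuclideanSpace ℝ (Fin n)) (hx : x ∈ X)
    (hder : GeomDerivableAt X x) :
    ∀ w : EuclideanSpace ℝ (Fin n),
      HasSemiderivAt (fun z => Metric.infDist z X) x w
        (Metric.infDist w (tangentConeAt' X x)) := by
  intro w
  simp only [HasSemiderivAt, Metric.infDist_zero_of_mem hx, sub_zero, smul_eq_mul]
  refine tendsto_order.2 ⟨fun a ha => ?_, fun b hb => ?_⟩
  · obtain ⟨r, har, hr⟩ := exists_between ha
    filter_upwards [eventually_le_inv_mul_infDist hx hr] with p hp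
    exact har.trans_le hp
  · obtain ⟨u, huT, hwu⟩ :=
      (Metric.infDist_lt_iff ⟨0, zero_mem_tangentConeAt' hx⟩).1 hb
    obtain ⟨ε, hε, ζ, -, hζX, hζ⟩ := hder u huT
    exact eventually_inv_mul_infDist_lt_of_curve hε hζX hζ hwu

/-- if the nonempty closed set `X` is geometrically derivable at `x̄ ∈ X`,
then `f = dist(·, X)` is semi-differentiable at `x̄` with `df(x̄)(w) = dist(w, T_X(x̄))`
for every `w`. -/
theorem dist_semidifferentiable_of_geomDerivable {n : ℕ}
    (X : Set (EuclideanSpace ℝ (Fin n))) (hXne : X.Nonempty) (hXcl : IsClosed X)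
    (x : EuclideanSpace ℝ (Fin n)) (hx : x ∈ X)
    (hder : GeomDerivableAt X x) :
    ∀ w : EuclideanSpace ℝ (Fin n),
      HasSemiderivAt (fun z => Metric.infDist z X) x w
        (Metric.infDist w (tangentConeAt' X x)) :=
  dist_semidifferentiable_of_geomDerivable_general X x hx hder
end

section
/- If f, g : ℝⁿ → ℝ ∪ {+∞} each have the descent property on Ω ⊆ ℝⁿ, with constants L_f and L_g respectively, then f + g has the descent property on Ω with constant L_f + L_g. In particular, the proof uses that the descent property forces df(x)(w) > −∞ for all x, w, and hence df(x)(w) + dg(x)(w) ≤ d(f + g)(x)(w) holds for all x, w ∈ ℝⁿ without any qualification condition. -/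
open Filter Topology Set

/-- `f` has the descent property on `Ω` with constant `L`:
`f(y) ≤ f(x) + df(x)(y − x) + (L/2)‖y − x‖²` for all `x, y ∈ Ω`. -/
def DescentPropOn {n : ℕ} (f : EuclideanSpace ℝ (Fin n) → EReal)
    (Ω : Set (EuclideanSpace ℝ (Fin n))) (L : ℝ) : Prop :=
  ∀ x ∈ Ω, ∀ y ∈ Ω,
    f y ≤ f x + subderiv f x (y - x) + (((L / 2) * ‖y - x‖ ^ 2 : ℝ) : EReal)

/-!
At a point `x` where `f x` and `g x` are finite, the difference quotient of `f + g` is the sum of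
those of `f` and `g`, and a liminf of a sum dominates the sum of the liminfs; this gives
`df(x) + dg(x) ≤ d(f + g)(x)`, and adding the two descent inequalities gives the one for `f + g`.
A subderivative `df(x)(y - x) = ⊥` would force `f y = ⊥` through the descent inequality.
-/

section

variable {n : ℕ} {f g : EuclideanSpace ℝ (Fin n) → EReal} {Ω : Set (EuclideanSpace ℝ (Fin n))}
  {x y : EuclideanSpace ℝ (Fin n)}

theorem le_subderiv_add (hfx : f x ≠ ⊥) (hgx : g x ≠ ⊥) (w : EuclideanSpace ℝ (Fin n)) :
    subderiv f x w + subderiv g x w ≤ subderiv (fun z => f z + g z) x w := by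
  refine EReal.le_liminf_add.trans (liminf_le_liminf ?_)
  have hpos : ∀ᶠ p : ℝ × EuclideanSpace ℝ (Fin n) in 𝓝[>] 0 ×ˢ 𝓝 w, 0 < p.1 :=
    Eventually.prod_inl self_mem_nhdsWithin _
  filter_upwards [hpos] with p hp
  have hinv : (0 : EReal) ≤ ((p.1⁻¹ : ℝ) : EReal) := by exact_mod_cast (inv_pos.2 hp).le
  rw [EReal.add_sub_add_comm (.inl hfx) (.inr hgx),
    EReal.left_distrib_of_nonneg_of_ne_top hinv (EReal.coe_ne_top _)]
  rfl

theorem DescentPropOn.subderiv_ne_bot {L : ℝ} (hf : DescentPropOn f Ω L) (hx : x ∈ Ω)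
    (hy : y ∈ Ω) (hfy : f y ≠ ⊥) : subderiv f x (y - x) ≠ ⊥ := by
  intro hbot
  have h := hf x hx y hy
  rw [hbot, EReal.add_bot, EReal.bot_add, le_bot_iff] at h
  exact hfy h

theorem DescentPropOn.add {Lf Lg : ℝ} (hf : DescentPropOn f Ω Lf) (hg : DescentPropOn g Ω Lg)
    (hfΩ : ∀ x ∈ Ω, f x ≠ ⊥) (hgΩ : ∀ x ∈ Ω, g x ≠ ⊥) :
    DescentPropOn (fun z => f z + g z) Ω (Lf + Lg) := by
  intro x hx y hy
  set cf : EReal := ((Lf / 2 * ‖y - x‖ ^ 2 : ℝ) : EReal)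
  set cg : EReal := ((Lg / 2 * ‖y - x‖ ^ 2 : ℝ) : EReal)
  have hc : cf + cg = (((Lf + Lg) / 2 * ‖y - x‖ ^ 2 : ℝ) : EReal) := by
    rw [← EReal.coe_add]; ring_nf
  calc f y + g y
      ≤ (f x + subderiv f x (y - x) + cf) + (g x + subderiv g x (y - x) + cg) :=
        add_le_add (hf x hx y hy) (hg x hx y hy)
    _ = (f x + g x) + (subderiv f x (y - x) + subderiv g x (y - x)) + (cf + cg) := by abel
    _ ≤ (f x + g x) + subderiv (fun z => f z + g z) x (y - x) + (cf + cg) := by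
        gcongr; exact le_subderiv_add (hfΩ x hx) (hgΩ x hx) _
    _ = _ := by rw [hc]

end

theorem descent_property_sum_general {n : ℕ}
    (f g : EuclideanSpace ℝ (Fin n) → EReal)
    (Ω : Set (EuclideanSpace ℝ (Fin n)))
    -- `f` and `g` take values in ℝ ∪ {+∞}
    (hf_ne_bot : ∀ z, f z ≠ ⊥) (hg_ne_bot : ∀ z, g z ≠ ⊥)
    (Lf Lg : ℝ)
    (hf : DescentPropOn f Ω Lf) (hg : DescentPropOn g Ω Lg) :
    DescentPropOn (fun z => f z + g z) Ω (Lf + Lg) ∧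
      (∀ x ∈ Ω, ∀ y ∈ Ω, subderiv f x (y - x) ≠ ⊥) ∧
      (∀ x w, subderiv f x w + subderiv g x w ≤ subderiv (fun z => f z + g z) x w) :=
  ⟨hf.add hg (fun z _ => hf_ne_bot z) (fun z _ => hg_ne_bot z),
    fun _ hx y hy => hf.subderiv_ne_bot hx hy (hf_ne_bot y),
    fun x w => le_subderiv_add (hf_ne_bot x) (hg_ne_bot x) w⟩

/-- the descent property is preserved under sums, with constant `L_f + L_g`.
Moreover the descent property forces the subderivative to be `> −∞` between points of `Ω`,
and the superadditivity `df(x)(w) + dg(x)(w) ≤ d(f + g)(x)(w)` holds for all `x, w`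
without any qualification condition. -/
theorem descent_property_sum {n : ℕ}
    (f g : EuclideanSpace ℝ (Fin n) → EReal)
    (Ω : Set (EuclideanSpace ℝ (Fin n)))
    -- `f` and `g` take values in ℝ ∪ {+∞}
    (hf_ne_bot : ∀ z, f z ≠ ⊥) (hg_ne_bot : ∀ z, g z ≠ ⊥)
    (Lf Lg : ℝ) (hLf : 0 ≤ Lf) (hLg : 0 ≤ Lg)
    (hf : DescentPropOn f Ω Lf) (hg : DescentPropOn g Ω Lg) :
    DescentPropOn (fun z => f z + g z) Ω (Lf + Lg) ∧
      (∀ x ∈ Ω, ∀ y ∈ Ω, subderiv f x (y - x) ≠ ⊥) ∧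
      (∀ x w, subderiv f x w + subderiv g x w ≤ subderiv (fun z => f z + g z) x w) :=
  descent_property_sum_general f g Ω hf_ne_bot hg_ne_bot Lf Lg hf hg
end

section
/- Let Ω ⊆ ℝⁿ be a convex compact set, let F : ℝⁿ → ℝᵐ be L-smooth on Ω (i.e. F is differentiable with ∇F Lipschitz continuous with constant L on Ω), and let g : ℝᵐ → ℝ be a finite-valued concave function with Lipschitz constant ℓ on the set F(Ω) + unit ball. Then g ∘ F has the descent property on Ω with constant ℓL: for all x, y ∈ Ω, g(F(y)) ≤ g(F(x)) + dg(F(x))(∇F(x)(y − x)) + (ℓL/2)‖y − x‖², where dg(F(x))(∇F(x)(y − x)) = d(g ∘ F)(x)(y − x). -/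
/-! Since `g` is concave and Lipschitz near `F x`, its one-sided directional derivative
`D w = g'(F x; w)` exists, dominates `g u - g (F x)` in the direction `u - F x`, and is
`ℓ`-Lipschitz in `w`. Lipschitz continuity also makes the difference quotients of `g` converge
to `D w` jointly as `t ↓ 0, w' → w`, so `D` is the subderivative of `g`, and by the chain rule for
such semiderivatives `D (∇F(x) w)` is the subderivative of `g ∘ F`. Hence
`g (F y) - g (F x) ≤ D (F y - F x) ≤ D (∇F(x)(y - x)) + ℓ ‖F y - F x - ∇F(x)(y - x)‖`,
and the last norm is at most `L/2 ‖y - x‖²` by comparing `F` along the segment with the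
quadratic `t ↦ L/2 ‖y - x‖² t²`. -/

open Filter Topology Set

section Semiderivative

variable {E V W : Type*} [NormedAddCommGroup E] [NormedSpace ℝ E]
  [NormedAddCommGroup V] [NormedSpace ℝ V] [NormedAddCommGroup W] [NormedSpace ℝ W]

theorem HasFDerivAt.hasSemiderivAt {F : E → V} {F' : E →L[ℝ] V} {x : E}
    (hF : HasFDerivAt F F' x) (w : E) : HasSemiderivAt F x w (F' w) := by
  have hpos : ∀ᶠ p : ℝ × E in 𝓝[>] 0 ×ˢ 𝓝 w, 0 < p.1 :=
    tendsto_fst.eventually self_mem_nhdsWithin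
  refine (hasFDerivWithinAt_univ.2 hF).lim (d := fun p : ℝ × E => p.1 • p.2) ?_
    (.of_forall fun _ => mem_univ _) (tendsto_snd.congr' ?_)
  · simpa using ((tendsto_fst.mono_right nhdsWithin_le_nhds).smul tendsto_snd :
      Tendsto (fun p : ℝ × E => p.1 • p.2) _ (𝓝 ((0 : ℝ) • w)))
  · filter_upwards [hpos] with p hp
    rw [smul_smul, inv_mul_cancel₀ hp.ne', one_smul]

theorem HasSemiderivAt.comp {g : V → W} {F : E → V} {x w : E} {d : V} {D : W}
    (hg : HasSemiderivAt g (F x) d D) (hF : HasSemiderivAt F x w d) :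
    HasSemiderivAt (g ∘ F) x w D := by
  have hpos : ∀ᶠ p : ℝ × E in 𝓝[>] 0 ×ˢ 𝓝 w, 0 < p.1 :=
    tendsto_fst.eventually self_mem_nhdsWithin
  have hquot : Tendsto (fun p : ℝ × E => (p.1, (p.1)⁻¹ • (F (x + p.1 • p.2) - F x)))
      (𝓝[>] 0 ×ˢ 𝓝 w) (𝓝[>] 0 ×ˢ 𝓝 d) :=
    tendsto_fst.prodMk hF
  refine (Tendsto.comp hg hquot).congr' ?_
  filter_upwards [hpos] with p hp
  simp only [Function.comp_apply, smul_inv_smul₀ hp.ne', add_sub_cancel]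

end Semiderivative

theorem HasSemiderivAt.subderiv_eq {n : ℕ} {g : EuclideanSpace ℝ (Fin n) → ℝ}
    {x w : EuclideanSpace ℝ (Fin n)} {D : ℝ} (hg : HasSemiderivAt g x w D) :
    subderiv (fun u => (g u : EReal)) x w = D :=
  ((continuous_coe_real_ereal.tendsto D).comp hg).liminf_eq

section DirectionalDerivative

variable {V W : Type*} [NormedAddCommGroup V] [NormedSpace ℝ V]
  [NormedAddCommGroup W] [NormedSpace ℝ W]

theorem eventually_add_smul_mem_prod {s : Set V} {v : V} (hs : s ∈ 𝓝 v) (w : V) :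
    ∀ᶠ p : ℝ × V in 𝓝 0 ×ˢ 𝓝 w, v + p.1 • p.2 ∈ s := by
  rw [← nhds_prod_eq]
  exact (continuous_const.add (continuous_fst.smul continuous_snd)).continuousAt.preimage_mem_nhds
    (by simpa using hs)

theorem eventually_add_smul_mem {s : Set V} {v : V} (hs : s ∈ 𝓝 v) (w : V) :
    ∀ᶠ t : ℝ in 𝓝 0, v + t • w ∈ s :=
  (eventually_add_smul_mem_prod hs w).curry.mono fun _ h => h.self_of_nhds

theorem LipschitzOnWith.dist_difference_quotient_le {g : V → W} {K : NNReal} {s : Set V}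
    (hg : LipschitzOnWith K g s) {v w w' : V} {t : ℝ} (ht : 0 < t)
    (hw : v + t • w ∈ s) (hw' : v + t • w' ∈ s) :
    dist (t⁻¹ • (g (v + t • w') - g v)) (t⁻¹ • (g (v + t • w) - g v)) ≤ K * ‖w' - w‖ := by
  rw [dist_eq_norm, ← smul_sub, sub_sub_sub_cancel_right, norm_smul, norm_inv,
    Real.norm_of_nonneg ht.le, inv_mul_le_iff₀ ht, ← dist_eq_norm]
  calc dist (g (v + t • w')) (g (v + t • w)) ≤ K * dist (v + t • w') (v + t • w) :=
        hg.dist_le_mul _ hw' _ hw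
    _ = t * (K * ‖w' - w‖) := by
      rw [dist_add_left, dist_eq_norm, ← smul_sub, norm_smul, Real.norm_of_nonneg ht.le]
      ring

theorem LipschitzOnWith.hasSemiderivAt {g : V → W} {K : NNReal} {s : Set V}
    (hg : LipschitzOnWith K g s) {v w : V} (hs : s ∈ 𝓝 v) {D : W}
    (hD : HasDerivWithinAt (fun t : ℝ => g (v + t • w)) D (Ioi 0) 0) :
    HasSemiderivAt g v w D := by
  rw [hasDerivWithinAt_iff_tendsto_slope' self_notMem_Ioi] at hD
  have hray : Tendsto (fun p : ℝ × V => (p.1)⁻¹ • (g (v + p.1 • w) - g v))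
      (𝓝[>] 0 ×ˢ 𝓝 w) (𝓝 D) := by
    simpa [slope, Function.comp_def] using hD.comp (tendsto_fst (g := 𝓝 w))
  have hle : 𝓝[>] (0 : ℝ) ×ˢ 𝓝 w ≤ 𝓝 0 ×ˢ 𝓝 w := prod_mono nhdsWithin_le_nhds le_rfl
  refine hray.congr_dist
    (squeeze_zero' (g := fun p : ℝ × V => K * ‖p.2 - w‖) (.of_forall fun _ => dist_nonneg) ?_ ?_)
  · filter_upwards [tendsto_fst.eventually self_mem_nhdsWithin,
      hle (eventually_add_smul_mem_prod hs w),
      (tendsto_fst.mono_right nhdsWithin_le_nhds).eventually (eventually_add_smul_mem hs w)]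
      with p hp hp' hpw
    rw [dist_comm]
    exact hg.dist_difference_quotient_le hp hpw hp'
  · simpa using ((tendsto_snd.sub_const w).norm.const_mul (K : ℝ) :
      Tendsto (fun p : ℝ × V => K * ‖p.2 - w‖) (𝓝[>] 0 ×ˢ 𝓝 w) (𝓝 (K * ‖w - w‖)))

theorem LipschitzOnWith.dist_le_of_hasDerivWithinAt {g : V → W} {K : NNReal} {s : Set V}
    (hg : LipschitzOnWith K g s) {v w w' : V} (hs : s ∈ 𝓝 v) {D D' : W}
    (hD : HasDerivWithinAt (fun t : ℝ => g (v + t • w)) D (Ioi 0) 0)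
    (hD' : HasDerivWithinAt (fun t : ℝ => g (v + t • w')) D' (Ioi 0) 0) :
    dist D' D ≤ K * ‖w' - w‖ := by
  rw [hasDerivWithinAt_iff_tendsto_slope' self_notMem_Ioi] at hD hD'
  refine le_of_tendsto (hD'.dist hD) ?_
  filter_upwards [self_mem_nhdsWithin, nhdsWithin_le_nhds (eventually_add_smul_mem hs w),
    nhdsWithin_le_nhds (eventually_add_smul_mem hs w')] with t ht hw hw'
  simpa [slope] using hg.dist_difference_quotient_le ht hw hw'

end DirectionalDerivative

section Concave

variable {V : Type*} [NormedAddCommGroup V] [NormedSpace ℝ V]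

noncomputable def rightDirDeriv (g : V → ℝ) (v w : V) : ℝ :=
  derivWithin (fun t : ℝ => g (v + t • w)) (Ioi 0) 0

theorem ConcaveOn.comp_ray {g : V → ℝ} (hg : ConcaveOn ℝ univ g) (v w : V) :
    ConcaveOn ℝ univ (fun t : ℝ => g (v + t • w)) := by
  simpa [Function.comp_def, AffineMap.lineMap_apply, add_comm] using
    hg.comp_affineMap (AffineMap.lineMap v (v + w))

theorem ConcaveOn.hasDerivWithinAt_rightDirDeriv {g : V → ℝ} (hg : ConcaveOn ℝ univ g)
    (v w : V) :
    HasDerivWithinAt (fun t : ℝ => g (v + t • w)) (rightDirDeriv g v w) (Ioi 0) 0 := by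
  have h := (hg.comp_ray v w).neg.differentiableWithinAt_Ioi_of_mem_interior
    (x := 0) (by simp)
  exact (differentiableWithinAt_neg_iff.1 h).hasDerivWithinAt

theorem ConcaveOn.le_add_rightDirDeriv {g : V → ℝ} (hg : ConcaveOn ℝ univ g) (v u : V) :
    g u ≤ g v + rightDirDeriv g v (u - v) := by
  have h := (hg.comp_ray v (u - v)).slope_le_of_hasDerivWithinAt_Ioi (mem_univ 0)
    (mem_univ 1) one_pos (hg.hasDerivWithinAt_rightDirDeriv v (u - v))
  simp only [slope, sub_zero, inv_one, one_smul, zero_smul, add_zero, add_sub_cancel,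
    vsub_eq_sub] at h
  linarith

theorem ConcaveOn.hasSemiderivAt_rightDirDeriv {g : V → ℝ} (hg : ConcaveOn ℝ univ g)
    {K : NNReal} {s : Set V} (hgK : LipschitzOnWith K g s) {v : V} (hs : s ∈ 𝓝 v) (w : V) :
    HasSemiderivAt g v w (rightDirDeriv g v w) :=
  hgK.hasSemiderivAt hs (hg.hasDerivWithinAt_rightDirDeriv v w)

theorem ConcaveOn.rightDirDeriv_le_add {g : V → ℝ} (hg : ConcaveOn ℝ univ g)
    {K : NNReal} {s : Set V} (hgK : LipschitzOnWith K g s) {v : V} (hs : s ∈ 𝓝 v) (w w' : V) :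
    rightDirDeriv g v w' ≤ rightDirDeriv g v w + K * ‖w' - w‖ := by
  have h := hgK.dist_le_of_hasDerivWithinAt hs (hg.hasDerivWithinAt_rightDirDeriv v w)
    (hg.hasDerivWithinAt_rightDirDeriv v w')
  rw [Real.dist_eq] at h
  linarith [le_abs_self (rightDirDeriv g v w' - rightDirDeriv g v w)]

end Concave

theorem Convex.norm_sub_sub_fderiv_le_of_lipschitzOnWith {E W : Type*}
    [NormedAddCommGroup E] [NormedSpace ℝ E] [NormedAddCommGroup W] [NormedSpace ℝ W]
    {Ω : Set E} (hΩ : Convex ℝ Ω) {F : E → W} {F' : E → E →L[ℝ] W} {K : NNReal}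
    (hF : ∀ z ∈ Ω, HasFDerivAt F (F' z) z) (hF' : LipschitzOnWith K F' Ω)
    {x y : E} (hx : x ∈ Ω) (hy : y ∈ Ω) :
    ‖F y - F x - F' x (y - x)‖ ≤ K / 2 * ‖y - x‖ ^ 2 := by
  have hseg : ∀ t ∈ Icc (0 : ℝ) 1, x + t • (y - x) ∈ Ω := fun t ht => hΩ.add_smul_sub_mem hx hy ht
  have hderiv : ∀ t ∈ Icc (0 : ℝ) 1, HasDerivAt
      (fun t : ℝ => F (x + t • (y - x)) - F x - t • F' x (y - x))
      (F' (x + t • (y - x)) (y - x) - F' x (y - x)) t := fun t ht => by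
    have hline : HasDerivAt (fun t : ℝ => x + t • (y - x)) (y - x) t := by
      simpa using ((hasDerivAt_id t).smul_const (y - x)).const_add x
    exact ((((hF _ (hseg t ht)).comp_hasDerivAt t hline).sub_const (F x)).fun_sub
      ((hasDerivAt_id t).smul_const (F' x (y - x)))).congr_deriv (by rw [one_smul])
  have hbound : ∀ t ∈ Ico (0 : ℝ) 1,
      ‖F' (x + t • (y - x)) (y - x) - F' x (y - x)‖ ≤ K * ‖y - x‖ ^ 2 * t := fun t ht => by
    have hdist := hF'.dist_le_mul _ (hseg t (Ico_subset_Icc_self ht)) _ hx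
    rw [dist_self_add_left, norm_smul, Real.norm_of_nonneg ht.1] at hdist
    calc ‖F' (x + t • (y - x)) (y - x) - F' x (y - x)‖
        ≤ ‖F' (x + t • (y - x)) - F' x‖ * ‖y - x‖ :=
          (F' (x + t • (y - x)) - F' x).le_opNorm (y - x)
      _ ≤ K * (t * ‖y - x‖) * ‖y - x‖ := by
          gcongr; rwa [← dist_eq_norm]
      _ = K * ‖y - x‖ ^ 2 * t := by ring
  have h := image_norm_le_of_norm_deriv_right_le_deriv_boundary
    (fun t ht => (hderiv t ht).continuousAt.continuousWithinAt)
    (fun t ht => (hderiv t (Ico_subset_Icc_self ht)).hasDerivWithinAt)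
    (B := fun t => K / 2 * ‖y - x‖ ^ 2 * t ^ 2) (by simp)
    (fun t => by simpa using ((hasDerivAt_pow 2 t).const_mul (K / 2 * ‖y - x‖ ^ 2))) ?_
    (right_mem_Icc.2 zero_le_one)
  · simpa using h
  · intro t ht
    convert hbound t ht using 1
    ring

open Pointwise

theorem concave_comp_smooth_descent_property_general {n m : ℕ}
    (Ω : Set (EuclideanSpace ℝ (Fin n))) (hΩconv : Convex ℝ Ω)
    (F : EuclideanSpace ℝ (Fin n) → EuclideanSpace ℝ (Fin m))
    (F' : EuclideanSpace ℝ (Fin n) → (EuclideanSpace ℝ (Fin n) →L[ℝ] EuclideanSpace ℝ (Fin m)))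
    (L ℓ : ℝ) (hL : 0 < L) (hℓ : 0 ≤ ℓ)
    -- `F` is `L`-smooth on `Ω`: differentiable, with `∇F` Lipschitz with constant `L` on `Ω`
    (hFdiff : ∀ z, HasFDerivAt F (F' z) z)
    (hFLip : LipschitzOnWith (Real.toNNReal L) F' Ω)
    (g : EuclideanSpace ℝ (Fin m) → ℝ)
    -- `g` is a finite-valued concave function
    (hgconc : ConcaveOn ℝ Set.univ g)
    -- with Lipschitz constant `ℓ` on `F(Ω)` fattened by the unit ball
    (hgLip : LipschitzOnWith (Real.toNNReal ℓ) g (F '' Ω + Metric.closedBall 0 1)) :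
    ∀ x ∈ Ω, ∀ y ∈ Ω,
      (((g (F y) : ℝ) : EReal) ≤ ((g (F x) : ℝ) : EReal) +
          subderiv (fun u => ((g u : ℝ) : EReal)) (F x) (F' x (y - x)) +
          (((ℓ * L / 2) * ‖y - x‖ ^ 2 : ℝ) : EReal)) ∧
        subderiv (fun u => ((g u : ℝ) : EReal)) (F x) (F' x (y - x)) =
          subderiv (fun z => ((g (F z) : ℝ) : EReal)) x (y - x) := by
  intro x hx y hy
  have hnhds : F '' Ω + Metric.closedBall 0 1 ∈ 𝓝 (F x) := by
    refine Filter.mem_of_superset (Metric.closedBall_mem_nhds (F x) one_pos) ?_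
    rw [← singleton_add_closedBall_zero]
    exact add_subset_add_right (singleton_subset_iff.2 (mem_image_of_mem F hx))
  set w := F' x (y - x)
  have hsemi := hgconc.hasSemiderivAt_rightDirDeriv hgLip hnhds w
  have hsub := hsemi.subderiv_eq
  have hsub_comp := (hsemi.comp ((hFdiff x).hasSemiderivAt (y - x))).subderiv_eq
  refine ⟨?_, hsub.trans hsub_comp.symm⟩
  have hdir := hgconc.rightDirDeriv_le_add hgLip hnhds w (F y - F x)
  have hF := hΩconv.norm_sub_sub_fderiv_le_of_lipschitzOnWith (fun z _ => hFdiff z) hFLip hx hy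
  rw [Real.coe_toNNReal _ hℓ] at hdir
  rw [Real.coe_toNNReal _ hL.le] at hF
  rw [hsub]
  norm_cast
  calc g (F y) ≤ g (F x) + rightDirDeriv g (F x) (F y - F x) := hgconc.le_add_rightDirDeriv _ _
    _ ≤ g (F x) + rightDirDeriv g (F x) w + ℓ * ‖F y - F x - w‖ := by linarith
    _ ≤ g (F x) + rightDirDeriv g (F x) w + ℓ * (L / 2 * ‖y - x‖ ^ 2) := by gcongr
    _ = g (F x) + rightDirDeriv g (F x) w + ℓ * L / 2 * ‖y - x‖ ^ 2 := by ring

/-- if `Ω` is convex and compact, `F` is `L`-smooth on `Ω` (differentiable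
with its derivative `L`-Lipschitz on `Ω`), and `g` is a finite-valued concave function
which is `ℓ`-Lipschitz on `F(Ω) + B`, then `g ∘ F` has the descent property on `Ω`
with constant `ℓ·L`:  for all `x, y ∈ Ω`,
`g(F(y)) ≤ g(F(x)) + dg(F(x))(∇F(x)(y − x)) + (ℓL/2)‖y − x‖²`, where
`dg(F(x))(∇F(x)(y − x)) = d(g ∘ F)(x)(y − x)`. -/
theorem concave_comp_smooth_descent_property {n m : ℕ}
    (Ω : Set (EuclideanSpace ℝ (Fin n))) (hΩconv : Convex ℝ Ω) (hΩcomp : IsCompact Ω)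
    (F : EuclideanSpace ℝ (Fin n) → EuclideanSpace ℝ (Fin m))
    (F' : EuclideanSpace ℝ (Fin n) → (EuclideanSpace ℝ (Fin n) →L[ℝ] EuclideanSpace ℝ (Fin m)))
    (L ℓ : ℝ) (hL : 0 < L) (hℓ : 0 ≤ ℓ)
    -- `F` is `L`-smooth on `Ω`: differentiable, with `∇F` Lipschitz with constant `L` on `Ω`
    (hFdiff : ∀ z, HasFDerivAt F (F' z) z)
    (hFLip : LipschitzOnWith (Real.toNNReal L) F' Ω)
    (g : EuclideanSpace ℝ (Fin m) → ℝ)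
    -- `g` is a finite-valued concave function
    (hgconc : ConcaveOn ℝ Set.univ g)
    -- with Lipschitz constant `ℓ` on `F(Ω)` fattened by the unit ball
    (hgLip : LipschitzOnWith (Real.toNNReal ℓ) g (F '' Ω + Metric.closedBall 0 1)) :
    ∀ x ∈ Ω, ∀ y ∈ Ω,
      (((g (F y) : ℝ) : EReal) ≤ ((g (F x) : ℝ) : EReal) +
          subderiv (fun u => ((g u : ℝ) : EReal)) (F x) (F' x (y - x)) +
          (((ℓ * L / 2) * ‖y - x‖ ^ 2 : ℝ) : EReal)) ∧
        subderiv (fun u => ((g u : ℝ) : EReal)) (F x) (F' x (y - x)) =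
          subderiv (fun z => ((g (F z) : ℝ) : EReal)) x (y - x) :=
  concave_comp_smooth_descent_property_general Ω hΩconv F F' L ℓ hL hℓ hFdiff hFLip g hgconc hgLip
end

section
/- Let f : ℝⁿ → ℝ ∪ {+∞} have the descent property on ℝⁿ with constant L ≥ 0, and suppose df(x)(w) < 0 for some x, w ∈ ℝⁿ with ‖w‖ ≤ 1. Then for any reduction multiple μ ∈ (0, 1) the Armijo backtracking test terminates finitely: there exists a nonnegative integer m with f(x + μᵐ w) − f(x) < (μᵐ/2) df(x)(w). -/
open Filter Topology Set

lemma map_mul_right_nhdsWithin_Ioi {c : ℝ} (hc : 0 < c) :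
    Filter.map (fun r : ℝ => r * c) (𝓝[>] (0:ℝ)) = 𝓝[>] (0:ℝ) := by
  have himg : (fun r : ℝ => r * c) '' Set.Ioi 0 = Set.Ioi 0 := by
    ext y
    simp only [Set.mem_image, Set.mem_Ioi]
    constructor
    · rintro ⟨r, hr, rfl⟩; positivity
    · intro hy; exact ⟨y / c, by positivity, by field_simp⟩
  have h := (Homeomorph.mulRight₀ c hc.ne').isEmbedding.map_nhdsWithin_eq (Set.Ioi 0) 0
  simpa [Homeomorph.coe_mulRight₀, himg] using h

lemma subderiv_smul_le {n : ℕ} (f : EuclideanSpace ℝ (Fin n) → EReal)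
    (x w : EuclideanSpace ℝ (Fin n)) {t b : ℝ} (ht : 0 < t)
    (hb : subderiv f x w < (b : EReal)) :
    subderiv f x (t • w) ≤ ((t * b : ℝ) : EReal) := by
  set g : ℝ × EuclideanSpace ℝ (Fin n) → EReal :=
    fun p => (((p.1)⁻¹ : ℝ) : EReal) * (f (x + p.1 • p.2) - f x) with hg
  have hfreq : ∃ᶠ p in (𝓝[>] (0:ℝ)) ×ˢ 𝓝 w, g p < (b : EReal) :=
    frequently_lt_of_liminf_lt (by isBoundedDefault) hb
  set Φ : ℝ × EuclideanSpace ℝ (Fin n) → ℝ × EuclideanSpace ℝ (Fin n) :=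
    Prod.map (fun r => r * t⁻¹) (fun u => t • u) with hΦ
  have hmap : Filter.map Φ ((𝓝[>] (0:ℝ)) ×ˢ 𝓝 w) = (𝓝[>] (0:ℝ)) ×ˢ 𝓝 (t • w) := by
    rw [hΦ, ← Filter.prod_map_map_eq']
    congr 1
    · exact map_mul_right_nhdsWithin_Ioi (inv_pos.2 ht)
    · exact (Homeomorph.smulOfNeZero t ht.ne').map_nhds_eq w
  have hrw : subderiv f x (t • w) = Filter.liminf (g ∘ Φ) ((𝓝[>] (0:ℝ)) ×ˢ 𝓝 w) := by
    rw [Filter.liminf_comp, hmap]; rfl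
  rw [hrw]
  apply Filter.liminf_le_of_frequently_le'
  refine hfreq.mono ?_
  rintro ⟨r, u⟩ hp
  have harg : (r * t⁻¹) • (t • u) = r • u := by
    rw [smul_smul]; congr 1; field_simp
  have hco : ((r * t⁻¹)⁻¹ : ℝ) = t * r⁻¹ := by
    rw [mul_inv, inv_inv, mul_comm]
  show (((r * t⁻¹)⁻¹ : ℝ) : EReal) * (f (x + (r * t⁻¹) • (t • u)) - f x) ≤ ((t * b : ℝ) : EReal)
  rw [harg, hco, EReal.coe_mul, mul_assoc, EReal.coe_mul]
  exact mul_le_mul_of_nonneg_left hp.le (by exact_mod_cast ht.le)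

/-- finiteness of the Armijo backtracking process under the descent
property.  If `f` has the descent property on `ℝⁿ` and `df(x)(w) < 0` for some `x, w`
with `‖w‖ ≤ 1`, then for any reduction multiple `μ ∈ (0,1)` there is a nonnegative
integer `m` with `f(x + μᵐ w) − f(x) < (μᵐ/2) df(x)(w)`. -/
theorem armijo_terminates_of_descent_property {n : ℕ}
    (f : EuclideanSpace ℝ (Fin n) → EReal)
    -- `f` takes values in ℝ ∪ {+∞}
    (hf_ne_bot : ∀ z, f z ≠ ⊥)
    (L : ℝ) (hL : 0 ≤ L)
    (hdesc : DescentPropOn f Set.univ L)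
    (x w : EuclideanSpace ℝ (Fin n)) (hw : ‖w‖ ≤ 1)
    (hneg : subderiv f x w < 0)
    (μ : ℝ) (hμ : μ ∈ Set.Ioo (0:ℝ) 1) :
    ∃ m : ℕ, f (x + (μ ^ m) • w) - f x < ((μ ^ m / 2 : ℝ) : EReal) * subderiv f x w := by
  obtain ⟨hμ0, hμ1⟩ := hμ
  -- f x is real
  have hx_top : f x ≠ ⊤ := by
    intro htop
    have hsub : subderiv f x (x - x) = ⊥ := by
      have hev : ∀ᶠ p in ((𝓝[>] (0:ℝ)) ×ˢ 𝓝 (x - x)),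
          (((p.1)⁻¹ : ℝ) : EReal) * (f (x + p.1 • p.2) - f x) = ⊥ := by
        filter_upwards [Filter.prod_mem_prod self_mem_nhdsWithin Filter.univ_mem] with p hp
        rw [htop, EReal.sub_top, EReal.mul_bot_of_pos]
        exact_mod_cast inv_pos.2 hp.1
      rw [subderiv, Filter.liminf_congr hev, Filter.liminf_const]
    have h := hdesc x (Set.mem_univ x) x (Set.mem_univ x)
    rw [hsub, htop] at h
    simp at h
  have hfx : ((f x).toReal : EReal) = f x := EReal.coe_toReal hx_top (hf_ne_bot x)
  set fx := (f x).toReal with hfx_def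
  -- subderiv f x w is real
  have hd_bot : subderiv f x w ≠ ⊥ := by
    intro hbot
    have h := hdesc x (Set.mem_univ x) (x + w) (Set.mem_univ _)
    rw [add_sub_cancel_left, hbot, ← hfx] at h
    simp only [EReal.add_bot, EReal.bot_add, le_bot_iff] at h
    exact hf_ne_bot _ h
  have hd_top : subderiv f x w ≠ ⊤ :=
    (hneg.trans_le le_top).ne
  have hdco : ((subderiv f x w).toReal : EReal) = subderiv f x w :=
    EReal.coe_toReal hd_top hd_bot
  set d := (subderiv f x w).toReal with hd_def
  have hd_neg : d < 0 := by
    rw [← hdco] at hneg; exact_mod_cast hneg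
  -- choose m with L * μ^m < -d
  have htends : Filter.Tendsto (fun m : ℕ => μ ^ m) Filter.atTop (𝓝 0) :=
    tendsto_pow_atTop_nhds_zero_of_lt_one hμ0.le hμ1
  obtain ⟨m, hm⟩ := (htends.eventually_lt_const
    (show (0:ℝ) < (-d) / (L + 1) from div_pos (by linarith) (by linarith))).exists
  refine ⟨m, ?_⟩
  set t := μ ^ m with ht_def
  have ht : 0 < t := pow_pos hμ0 m
  have hLt : L * t < -d := by
    have h1 : (L + 1) * t < (L + 1) * ((-d) / (L + 1)) := by
      apply mul_lt_mul_of_pos_left hm (by linarith)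
    rw [mul_div_cancel₀ _ (by linarith : L + 1 ≠ 0)] at h1
    nlinarith
  set ε := (-d - L * t) / 4 with hε_def
  have hε : 0 < ε := by rw [hε_def]; linarith
  have hkey : subderiv f x (t • w) ≤ ((t * (d + ε) : ℝ) : EReal) := by
    apply subderiv_smul_le f x w ht
    rw [← hdco]
    exact_mod_cast lt_add_of_pos_right d hε
  -- descent
  have hdes := hdesc x (Set.mem_univ x) (x + t • w) (Set.mem_univ _)
  rw [add_sub_cancel_left] at hdes
  have hnorm : L / 2 * ‖t • w‖ ^ 2 ≤ L / 2 * t ^ 2 := by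
    rw [norm_smul]
    have h1 : ‖w‖ ≥ 0 := norm_nonneg w
    have h2 : |t| = t := abs_of_pos ht
    rw [Real.norm_eq_abs, h2]
    have h3 : ‖w‖ ^ 2 ≤ 1 := by nlinarith
    nlinarith [mul_nonneg (mul_nonneg hL (sq_nonneg t)) (sub_nonneg.2 h3)]
  have hbound : f (x + t • w) ≤ ((fx + t * (d + ε) + L / 2 * t ^ 2 : ℝ) : EReal) := by
    refine hdes.trans ?_
    rw [← hfx]
    calc (fx : EReal) + subderiv f x (t • w) + ((L / 2 * ‖t • w‖ ^ 2 : ℝ) : EReal)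
        ≤ (fx : EReal) + ((t * (d + ε) : ℝ) : EReal) + ((L / 2 * t ^ 2 : ℝ) : EReal) :=
          add_le_add (add_le_add le_rfl hkey) (EReal.coe_le_coe_iff.2 hnorm)
      _ = ((fx + t * (d + ε) + L / 2 * t ^ 2 : ℝ) : EReal) := by
          rw [← EReal.coe_add, ← EReal.coe_add]
  have hy_top : f (x + t • w) ≠ ⊤ := by
    intro h; rw [h] at hbound; exact (EReal.coe_lt_top _).not_ge hbound
  have hya : ((f (x + t • w)).toReal : EReal) = f (x + t • w) :=
    EReal.coe_toReal hy_top (hf_ne_bot _)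
  set a := (f (x + t • w)).toReal with ha_def
  have ha : a ≤ fx + t * (d + ε) + L / 2 * t ^ 2 := by
    rw [← hya] at hbound; exact_mod_cast hbound
  rw [← hya, ← hfx, ← hdco, ← EReal.coe_sub, ← EReal.coe_mul, EReal.coe_lt_coe_iff]
  have hfin : t * (d + ε) + L / 2 * t ^ 2 < t / 2 * d := by
    have h1 : 0 < t := ht
    rw [hε_def]
    nlinarith [mul_pos ht (show 0 < -(d + L * t) by linarith)]
  linarith
end

section
/- Let f : ℝⁿ → ℝ ∪ {+∞} be bounded below by f* and have the descent property on ℝⁿ with constant L > 0. Let (x_k) and (w_k) satisfy x_{k+1} = x_k + α_k w_k with ‖w_k‖ ≤ 1, d_k := df(x_k)(w_k) < 0, and each α_k produced by Armijo backtracking with reduction multiple μ ∈ (0, 1): either α_k = 1 passes the test, or α_k passes while α_k/μ fails. Set M := min{1/2, μ/(2L)}. Then for every N with min_{0 ≤ k ≤ N} min{|d_k|, d_k²} < 1, the bound min_{0 ≤ k ≤ N} |d_k| ≤ √((f(x_0) − f*)/(M(N + 1))) holds. -/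
open Filter Topology Set

/-!
Each Armijo step decreases `f` by at least `α_k |d_k| / 2`. A step size `α_k < 1` was reached
because `α_k / μ` failed the test; comparing that failure with the descent property at
`x_k + (α_k / μ) w_k` (using positive homogeneity of `df(x_k)`) gives `μ |d_k| ≤ L α_k`. Hence
every step decreases `f` by at least `M min{|d_k|, d_k²}`, and telescoping down to `f*` bounds
`(N + 1) M min_k min{|d_k|, d_k²}` by `f(x_0) − f*`. Once that minimum is below `1` it equals
`d_k²`, which gives the square-root rate.
-/

lemma map_mul_left_nhdsGT₀ {𝕜 : Type*} [Field 𝕜] [LinearOrder 𝕜] [IsStrictOrderedRing 𝕜]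
    [TopologicalSpace 𝕜] [ContinuousMul 𝕜] {s : 𝕜} (hs : 0 < s) (a : 𝕜) :
    map (s * ·) (𝓝[>] a) = 𝓝[>] (s * a) := by
  simpa [image_mul_left_Ioi hs] using
    (Homeomorph.mulLeft₀ s hs.ne').isEmbedding.map_nhdsWithin_eq (Ioi a) a

lemma subderiv_smul_of_pos {n : ℕ} (f : EuclideanSpace ℝ (Fin n) → EReal)
    (x w : EuclideanSpace ℝ (Fin n)) {s : ℝ} (hs : 0 < s) :
    subderiv f x (s • w) = s * subderiv f x w := by
  -- the change of variables `(t, v) ↦ (t / s, s • v)` turns the difference quotient for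
  -- `s • w` into `s` times the one for `w`
  have hfilter : map (Prod.map (s⁻¹ * ·) (s • ·)) ((𝓝[>] (0:ℝ)) ×ˢ 𝓝 w)
      = (𝓝[>] (0:ℝ)) ×ˢ 𝓝 (s • w) := by
    rw [← prod_map_map_eq', map_mul_left_nhdsGT₀ (inv_pos.2 hs), mul_zero]
    exact congrArg _ ((Homeomorph.smulOfNeZero s hs.ne').map_nhds_eq w)
  rw [subderiv, subderiv, ← hfilter, ← liminf_comp,
    ← EReal.liminf_const_mul_of_nonneg_of_ne_top (EReal.coe_nonneg.2 hs.le) (EReal.coe_ne_top s)]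
  congr 1
  ext ⟨t, v⟩
  simp only [Function.comp_apply, Prod.map_apply, smul_smul]
  rw [← mul_assoc, ← EReal.coe_mul, mul_inv, inv_inv, mul_comm s⁻¹ t, inv_mul_cancel_right₀ hs.ne']

section

variable {n : ℕ} {f : EuclideanSpace ℝ (Fin n) → EReal}

lemma subderiv_eq_bot_of_eq_top {x : EuclideanSpace ℝ (Fin n)} (hx : f x = ⊤)
    (w : EuclideanSpace ℝ (Fin n)) : subderiv f x w = ⊥ := by
  have hbot : ∀ᶠ p : ℝ × EuclideanSpace ℝ (Fin n) in (𝓝[>] (0:ℝ)) ×ˢ 𝓝 w,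
      (((p.1)⁻¹ : ℝ) : EReal) * (f (x + p.1 • p.2) - f x) = ⊥ := by
    filter_upwards [prod_mem_prod self_mem_nhdsWithin univ_mem] with p hp
    rw [hx, EReal.sub_top, EReal.coe_mul_bot_of_pos (inv_pos.2 hp.1)]
  rw [subderiv, liminf_congr hbot, liminf_const]

def ArmijoAccepts (f : EuclideanSpace ℝ (Fin n) → EReal) (x w : EuclideanSpace ℝ (Fin n))
    (d α : ℝ) : Prop :=
  f (x + α • w) - f x < ((α / 2 * d : ℝ) : EReal)

def IsArmijoBacktrackingStep (f : EuclideanSpace ℝ (Fin n) → EReal) (μ : ℝ)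
    (x w : EuclideanSpace ℝ (Fin n)) (d α : ℝ) : Prop :=
  (α = 1 ∧ ArmijoAccepts f x w d α) ∨
    (α < 1 ∧ 0 < α ∧ ArmijoAccepts f x w d α ∧ ¬ ArmijoAccepts f x w d (α / μ))

variable {x w : EuclideanSpace ℝ (Fin n)} {F d : ℝ}

lemma ArmijoAccepts.lt (hF : f x = F) {α : ℝ} (h : ArmijoAccepts f x w d α) :
    f (x + α • w) < ((F + α / 2 * d : ℝ) : EReal) := by
  rw [ArmijoAccepts, hF, EReal.sub_lt_iff (.inl (EReal.coe_ne_bot F))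
    (.inl (EReal.coe_ne_top F))] at h
  rwa [EReal.coe_add, add_comm (F : EReal)]

lemma le_of_not_armijoAccepts (hF : f x = F) {α : ℝ} (h : ¬ ArmijoAccepts f x w d α) :
    ((F + α / 2 * d : ℝ) : EReal) ≤ f (x + α • w) := by
  rw [ArmijoAccepts, not_lt, hF, EReal.le_sub_iff_add_le (.inl (EReal.coe_ne_bot F))
    (.inl (EReal.coe_ne_top F))] at h
  rwa [add_comm, EReal.coe_add]

lemma neg_le_mul_of_not_armijoAccepts {Ω : Set (EuclideanSpace ℝ (Fin n))} {L : ℝ}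
    (hL : 0 ≤ L) (hdesc : DescentPropOn f Ω L) {s : ℝ} (hs : 0 < s) (hx : x ∈ Ω)
    (hy : x + s • w ∈ Ω) (hF : f x = F) (hd : subderiv f x w = d) (hw : ‖w‖ ≤ 1)
    (hrej : ¬ ArmijoAccepts f x w d s) : -d ≤ L * s := by
  have hnorm : ‖s • w‖ ^ 2 ≤ s ^ 2 := by
    rw [norm_smul, Real.norm_of_nonneg hs.le, mul_pow]
    exact mul_le_of_le_one_right (sq_nonneg s) (pow_le_one₀ (norm_nonneg w) hw)
  have hup : f (x + s • w) ≤ ((F + s * d + L / 2 * s ^ 2 : ℝ) : EReal) :=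
    calc f (x + s • w)
        ≤ f x + subderiv f x (s • w) + ((L / 2 * ‖s • w‖ ^ 2 : ℝ) : EReal) := by
          simpa using hdesc x hx _ hy
      _ = ((F + s * d + L / 2 * ‖s • w‖ ^ 2 : ℝ) : EReal) := by
          rw [subderiv_smul_of_pos f x w hs, hd, hF]
          norm_cast
      _ ≤ ((F + s * d + L / 2 * s ^ 2 : ℝ) : EReal) := by
          gcongr
  have hcmp : F + s / 2 * d ≤ F + s * d + L / 2 * s ^ 2 := by
    exact_mod_cast (le_of_not_armijoAccepts hF hrej).trans hup
  have hscaled : s * -d ≤ s * (L * s) := by linarith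
  exact le_of_mul_le_mul_left hscaled hs

lemma min_one_le_of_isArmijoBacktrackingStep {L μ α : ℝ} (hL : 0 < L) (hμ : 0 < μ)
    (hdesc : DescentPropOn f univ L) (hF : f x = F) (hd : subderiv f x w = d) (hw : ‖w‖ ≤ 1)
    (hstep : IsArmijoBacktrackingStep f μ x w d α) : min 1 (μ * -d / L) ≤ α := by
  rcases hstep with ⟨rfl, -⟩ | ⟨-, hα, -, hrej⟩
  · exact min_le_left _ _
  · have := neg_le_mul_of_not_armijoAccepts hL.le hdesc (div_pos hα hμ) (mem_univ x)
      (mem_univ _) hF hd hw hrej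
    refine (min_le_right _ _).trans ?_
    rw [div_le_iff₀ hL]
    calc μ * -d ≤ μ * (L * (α / μ)) := by gcongr
      _ = α * L := by field_simp

lemma armijo_sufficient_decrease {L μ α : ℝ} (hL : 0 < L) (hμ : 0 < μ)
    (hdesc : DescentPropOn f univ L) (hF : f x = F) (hd : subderiv f x w = d) (hdneg : d < 0)
    (hw : ‖w‖ ≤ 1) (hstep : IsArmijoBacktrackingStep f μ x w d α) :
    f (x + α • w) < ((F - min (1 / 2) (μ / (2 * L)) * min |d| (d ^ 2) : ℝ) : EReal) := by
  have hα := min_one_le_of_isArmijoBacktrackingStep hL hμ hdesc hF hd hw hstep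
  have hacc : ArmijoAccepts f x w d α := hstep.elim (·.2) (·.2.2.1)
  rw [← abs_of_neg hdneg] at hα
  have hmin : 0 ≤ min |d| (d ^ 2) := le_min (abs_nonneg d) (sq_nonneg d)
  have hbound : min (1 / 2) (μ / (2 * L)) * min |d| (d ^ 2) ≤ α / 2 * |d| :=
    calc min (1 / 2) (μ / (2 * L)) * min |d| (d ^ 2)
        ≤ min (1 / 2 * |d|) (μ / (2 * L) * d ^ 2) :=
          le_min (mul_le_mul (min_le_left _ _) (min_le_left _ _) hmin (by norm_num))
            (mul_le_mul (min_le_right _ _) (min_le_right _ _) hmin (by positivity))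
      _ = min 1 (μ * |d| / L) * (|d| / 2) := by
          rw [min_mul_of_nonneg _ _ (by positivity), ← sq_abs d]
          ring_nf
      _ ≤ α / 2 * |d| := by nlinarith [abs_nonneg d]
  have hneg : α / 2 * d = -(α / 2 * |d|) := by rw [abs_of_neg hdneg]; ring
  refine (hacc.lt hF).trans_le ?_
  exact_mod_cast (by linarith : F + α / 2 * d ≤ F - _)

lemma exists_forall_le_and_mul_le_sub {a F : ℕ → ℝ} (h : ∀ k, a k ≤ F k - F (k + 1)) (N : ℕ) :
    ∃ k ≤ N, (∀ j ≤ N, a k ≤ a j) ∧ (N + 1) * a k ≤ F 0 - F (N + 1) := by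
  obtain ⟨k, hk, hmin⟩ := (Finset.range (N + 1)).exists_min_image a ⟨0, by simp⟩
  refine ⟨k, Nat.lt_succ_iff.1 (Finset.mem_range.1 hk),
    fun j hj => hmin j (Finset.mem_range.2 (Nat.lt_succ_of_le hj)), ?_⟩
  calc (N + 1) * a k = ∑ _j ∈ Finset.range (N + 1), a k := by simp
    _ ≤ ∑ j ∈ Finset.range (N + 1), a j := Finset.sum_le_sum hmin
    _ ≤ ∑ j ∈ Finset.range (N + 1), (F j - F (j + 1)) := Finset.sum_le_sum fun j _ => h j
    _ = F 0 - F (N + 1) := Finset.sum_range_sub' F (N + 1)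

lemma abs_le_sqrt_of_min_abs_sq_lt_one {t c : ℝ} (h1 : min |t| (t ^ 2) < 1)
    (hc : min |t| (t ^ 2) ≤ c) : |t| ≤ √c := by
  have ht : |t| < 1 := by
    by_contra! ht
    exact h1.not_ge (le_min ht (by nlinarith [sq_abs t]))
  refine Real.abs_le_sqrt (hc.trans' (le_min ?_ le_rfl))
  nlinarith [sq_abs t, abs_nonneg t]

end

theorem subderivative_method_convergence_rate_general {n : ℕ}
    (f : EuclideanSpace ℝ (Fin n) → EReal)
    -- `f` takes values in ℝ ∪ {+∞} and is bounded below by `f*`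
    (fstar : ℝ) (hbdd : ∀ z, (fstar : EReal) ≤ f z)
    (L : ℝ) (hL : 0 < L)
    (hdesc : DescentPropOn f Set.univ L)
    (μ : ℝ) (hμ : μ ∈ Set.Ioo (0:ℝ) 1)
    (x w : ℕ → EuclideanSpace ℝ (Fin n)) (α : ℕ → ℝ) (d : ℕ → ℝ)
    (hw : ∀ k, ‖w k‖ ≤ 1)
    (hd : ∀ k, subderiv f (x k) (w k) = ((d k : ℝ) : EReal))
    (hdneg : ∀ k, d k < 0)
    (hupd : ∀ k, x (k + 1) = x k + α k • w k)
    -- each `α_k` is produced by Armijo backtracking with reduction multiple `μ`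
    (harmijo : ∀ k,
      (α k = 1 ∧ f (x k + α k • w k) - f (x k) < ((α k / 2 * d k : ℝ) : EReal)) ∨
      (α k < 1 ∧ 0 < α k ∧
        f (x k + α k • w k) - f (x k) < ((α k / 2 * d k : ℝ) : EReal) ∧
        ¬ (f (x k + (α k / μ) • w k) - f (x k) < ((α k / (2 * μ) * d k : ℝ) : EReal)))) :
    ∀ N : ℕ, (∃ k ≤ N, min |d k| ((d k) ^ 2) < 1) →
      ∃ k ≤ N, |d k| ≤
        Real.sqrt (((f (x 0)).toReal - fstar) / (min (1/2) (μ / (2 * L)) * (N + 1))) := by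
  rintro N ⟨j, hjN, hj⟩
  set M := min (1 / 2 : ℝ) (μ / (2 * L))
  have hM : 0 < M := lt_min one_half_pos (by have := hμ.1; positivity)
  -- `df(x)(w) = ⊥` wherever `f x = ⊤`, while `d k` is real
  have hfin : ∀ k, f (x k) = (f (x k)).toReal := fun k =>
    (EReal.coe_toReal (fun htop => by simpa [subderiv_eq_bot_of_eq_top htop] using hd k)
      (ne_bot_of_le_ne_bot (EReal.coe_ne_bot fstar) (hbdd _))).symm
  have hstep : ∀ k, IsArmijoBacktrackingStep f μ (x k) (w k) (d k) (α k) := fun k => by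
    simpa only [IsArmijoBacktrackingStep, ArmijoAccepts, div_div, mul_comm μ 2] using harmijo k
  have hdecr : ∀ k, M * min |d k| (d k ^ 2) ≤ (f (x k)).toReal - (f (x (k + 1))).toReal :=
    fun k => by
      have := armijo_sufficient_decrease hL hμ.1 hdesc (hfin k) (hd k) (hdneg k) (hw k) (hstep k)
      rw [← hupd, hfin (k + 1), EReal.coe_lt_coe_iff] at this
      linarith
  obtain ⟨k, hkN, hkmin, hsum⟩ := exists_forall_le_and_mul_le_sub hdecr N
  have hlow : fstar ≤ (f (x (N + 1))).toReal := by
    have := hbdd (x (N + 1))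
    rwa [hfin (N + 1), EReal.coe_le_coe_iff] at this
  refine ⟨k, hkN, abs_le_sqrt_of_min_abs_sq_lt_one
    ((le_of_mul_le_mul_left (hkmin j hjN) hM).trans_lt hj) ?_⟩
  rw [le_div_iff₀ (by positivity)]
  linarith

/-- convergence rate of the subderivative method with Armijo backtracking.
If `f` is bounded below by `f*` and has the descent property on `ℝⁿ` with constant
`L > 0`, and the iterates `x_{k+1} = x_k + α_k w_k` use directions with `‖w_k‖ ≤ 1`,
`d_k = df(x_k)(w_k) < 0`, and Armijo step sizes, then with `M = min{1/2, μ/(2L)}`,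
for every `N` for which `min_{0 ≤ k ≤ N} min{|d_k|, d_k²} < 1` one has
`min_{0 ≤ k ≤ N} |d_k| ≤ √((f(x_0) − f*)/(M(N+1)))`. -/
theorem subderivative_method_convergence_rate {n : ℕ}
    (f : EuclideanSpace ℝ (Fin n) → EReal)
    -- `f` takes values in ℝ ∪ {+∞} and is bounded below by `f*`
    (hf_ne_bot : ∀ z, f z ≠ ⊥)
    (fstar : ℝ) (hbdd : ∀ z, (fstar : EReal) ≤ f z)
    (L : ℝ) (hL : 0 < L)
    (hdesc : DescentPropOn f Set.univ L)
    (μ : ℝ) (hμ : μ ∈ Set.Ioo (0:ℝ) 1)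
    (x w : ℕ → EuclideanSpace ℝ (Fin n)) (α : ℕ → ℝ) (d : ℕ → ℝ)
    (hw : ∀ k, ‖w k‖ ≤ 1)
    (hd : ∀ k, subderiv f (x k) (w k) = ((d k : ℝ) : EReal))
    (hdneg : ∀ k, d k < 0)
    (hupd : ∀ k, x (k + 1) = x k + α k • w k)
    -- each `α_k` is produced by Armijo backtracking with reduction multiple `μ`
    (harmijo : ∀ k,
      (α k = 1 ∧ f (x k + α k • w k) - f (x k) < ((α k / 2 * d k : ℝ) : EReal)) ∨
      (α k < 1 ∧ 0 < α k ∧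
        f (x k + α k • w k) - f (x k) < ((α k / 2 * d k : ℝ) : EReal) ∧
        ¬ (f (x k + (α k / μ) • w k) - f (x k) < ((α k / (2 * μ) * d k : ℝ) : EReal)))) :
    ∀ N : ℕ, (∃ k ≤ N, min |d k| ((d k) ^ 2) < 1) →
      ∃ k ≤ N, |d k| ≤
        Real.sqrt (((f (x 0)).toReal - fstar) / (min (1/2) (μ / (2 * L)) * (N + 1))) :=
  subderivative_method_convergence_rate_general f fstar hbdd L hL hdesc μ hμ x w α d hw hd hdneg
    hupd harmijo
end
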